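/- arXiv:1710.08775 — 9 statements merged into one kernel-verified Lean document; each statement's English description precedes it below -/
import Mathlib

section
/- Marginalization of a directed graph with hyperedges (HEDG) preserves ancestral relations: if G is a HEDG, W ⊆ V, and G^marg is the marginalization of G onto W, then for any two nodes v, w ∈ W, v is an ancestor of w in G if and only if v is an ancestor of w in G^marg. -/
namespace HedgPaper

variable {V : Type*}

/-- directed reachability: existence of a directed path (possibly trivial). -/
def Reach (E : V → V → Prop) : V → V → Prop := Relation.ReflTransGen E

/-- `v` and `w` lie in the same strongly connected component. -/
def InSC (E : V → V → Prop) (v w : V) : Prop := Reach E v w ∧ Reach E w v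

/-- the set of ancestors of a set `Z`. -/
def AncSet (E : V → V → Prop) (Z : Set V) : Set V := {v | ∃ z ∈ Z, Reach E v z}

/-- `H` is a simplicial complex over `V`. -/
def IsSimplicial (H : Set (Set V)) : Prop :=
  (∀ v : V, ({v} : Set V) ∈ H) ∧ ∀ F ∈ H, ∀ F' : Set V, F' ⊆ F → F' ∈ H

/-- direction of an edge on a path: forward, backward, or bidirected. -/
inductive EDir : Type
  | fwd | bwd | bi

/-- one step of a walk in a HEDG. -/
structure Step (V : Type*) where
  src : V
  dir : EDir
  dst : V

/-- the step is an actual (directed or bidirected) edge of the HEDG `(V,E,H)`. -/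
def Step.Valid (E : V → V → Prop) (H : Set (Set V)) (s : Step V) : Prop :=
  match s.dir with
  | .fwd => E s.src s.dst
  | .bwd => E s.dst s.src
  | .bi  => s.src ≠ s.dst ∧ ({s.src, s.dst} : Set V) ∈ H

/-- the step has an arrowhead at its destination. -/
def Step.HeadAtDst (s : Step V) : Prop := s.dir = EDir.fwd ∨ s.dir = EDir.bi

/-- the step has an arrowhead at its source. -/
def Step.HeadAtSrc (s : Step V) : Prop := s.dir = EDir.bwd ∨ s.dir = EDir.bi

/-- `l` is a walk (path, possibly with repeated nodes) from `x` to `y` in `(V,E,H)`. -/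
def IsWalk (E : V → V → Prop) (H : Set (Set V)) : List (Step V) → V → V → Prop
  | [], x, y => x = y
  | s :: l, x, y => s.src = x ∧ s.Valid E H ∧ IsWalk E H l s.dst y

/-- all interior nodes of the walk are `Z`-open in the d-separation sense:
colliders are ancestors of `Z`, non-colliders are not in `Z`. -/
def DInteriorOpen (E : V → V → Prop) (Z : Set V) : List (Step V) → Prop
  | [] => True
  | [_] => True
  | s :: t :: l =>
      ((s.HeadAtDst ∧ t.HeadAtSrc) → s.dst ∈ AncSet E Z) ∧
      (¬ (s.HeadAtDst ∧ t.HeadAtSrc) → s.dst ∉ Z) ∧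
      DInteriorOpen E Z (t :: l)

/-- `X` is d-separated from `Y` given `Z` in the HEDG `(V,E,H)`:
every walk from `X` to `Y` is `Z`-blocked. -/
def DSep (E : V → V → Prop) (H : Set (Set V)) (X Y Z : Set V) : Prop :=
  ∀ x ∈ X, ∀ y ∈ Y, ∀ l : List (Step V),
    IsWalk E H l x y → ¬ (x ∉ Z ∧ y ∉ Z ∧ DInteriorOpen E Z l)

/-- all interior nodes of the walk are `Z`-σ-open: colliders are ancestors of `Z`,
and a non-collider in `Z` must not point (via a directed edge of the path) to a
node outside of its strongly connected component. -/
def SigmaInteriorOpen (E : V → V → Prop) (Z : Set V) : List (Step V) → Prop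
  | [] => True
  | [_] => True
  | s :: t :: l =>
      ((s.HeadAtDst ∧ t.HeadAtSrc) → s.dst ∈ AncSet E Z) ∧
      (¬ (s.HeadAtDst ∧ t.HeadAtSrc) →
        ¬ (s.dst ∈ Z ∧ ((¬ s.HeadAtDst ∧ ¬ InSC E s.dst s.src) ∨
                        (¬ t.HeadAtSrc ∧ ¬ InSC E s.dst t.dst)))) ∧
      SigmaInteriorOpen E Z (t :: l)

/-- `X` is σ-separated from `Y` given `Z` in the HEDG `(V,E,H)`. -/
def SigmaSep (E : V → V → Prop) (H : Set (Set V)) (X Y Z : Set V) : Prop :=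
  ∀ x ∈ X, ∀ y ∈ Y, ∀ l : List (Step V),
    IsWalk E H l x y → ¬ (x ∉ Z ∧ y ∉ Z ∧ SigmaInteriorOpen E Z l)

/-- directed edges of the marginalization of `(V,E,H)` w.r.t. (i.e. after removing) `U`:
`a → b` iff there is a directed path `a → u₁ → ⋯ → u_r → b` in `G` with all `uᵢ ∈ U`. -/
def MargE (E : V → V → Prop) (U : Set V) : V → V → Prop :=
  fun a b => a ∉ U ∧ b ∉ U ∧
    ∃ c, Relation.ReflTransGen (fun x y => E x y ∧ y ∈ U) a c ∧ E c b

/-- hyperedges of the marginalization of `(V,E,H)` w.r.t. `U`. -/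
def MargH (E : V → V → Prop) (H : Set (Set V)) (U : Set V) : Set (Set V) :=
  {F' | (∀ v ∈ F', v ∉ U) ∧ ∃ F ∈ H, F ⊆ F' ∪ U ∧
    ∀ v ∈ F', (v ∈ F ∧ v ∉ U) ∨
      ∃ u ∈ F ∩ U, ∃ c, Relation.ReflTransGen (fun x y => E x y ∧ y ∈ U) u c ∧ E c v}

/-- bidirected-edge relation induced by the hyperedges. -/
def BiRel (H : Set (Set V)) : V → V → Prop :=
  fun x y => x ≠ y ∧ ({x, y} : Set V) ∈ H

/-- (generalized) moralization of a HEDG: `v — w` iff there are `a`, `b` with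
`v ∈ {a} ∪ Pa(a)`, `w ∈ {b} ∪ Pa(b)` and a bidirected chain `a ↔ ⋯ ↔ b`. -/
def MoralE (E : V → V → Prop) (H : Set (Set V)) : V → V → Prop :=
  fun v w => v ≠ w ∧ ∃ a b, (v = a ∨ E v a) ∧ (w = b ∨ E w b) ∧
    Relation.ReflTransGen (BiRel H) a b

/-- moralization of a directed graph: undirected versions of the directed edges plus
edges between distinct parents of a common child. -/
def MoralDirE (E : V → V → Prop) : V → V → Prop :=
  fun v w => v ≠ w ∧ (E v w ∨ E w v ∨ ∃ c, E v c ∧ E w c)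

/-- marginalization of an undirected graph `A` w.r.t. `W`: `a — b` iff there is a path
from `a` to `b` with all intermediate nodes in `W`. -/
def MargUnd (A : V → V → Prop) (W : Set V) : V → V → Prop :=
  fun a b => a ∉ W ∧ b ∉ W ∧ a ≠ b ∧
    ∃ c, Relation.ReflTransGen (fun x y => A x y ∧ y ∈ W) a c ∧ A c b

/-- separation in an undirected graph: every path from `X` to `Y` contains a node of
`Z` (including the endnodes). -/
def USep (A : V → V → Prop) (X Y Z : Set V) : Prop :=
  ∀ x ∈ X, ∀ y ∈ Y,
    ¬ (x ∉ Z ∧ Relation.ReflTransGen (fun a b => A a b ∧ b ∉ Z) x y)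

/-- edges of the induced sub-HEDG on `A`. -/
def InducedE (E : V → V → Prop) (A : Set V) : V → V → Prop :=
  fun a b => a ∈ A ∧ b ∈ A ∧ E a b

/-- hyperedges of the induced sub-HEDG on `A`. -/
def InducedH (H : Set (Set V)) (A : Set V) : Set (Set V) := {F | F ∈ H ∧ F ⊆ A}

/-- `F` is an inclusion-maximal hyperedge of `H`. -/
def MaximalHyperedge (H : Set (Set V)) (F : Set V) : Prop :=
  F ∈ H ∧ ∀ F' ∈ H, F ⊆ F' → F' = F

/-- edges of the augmented directed graph of a HEDG: the original directed edges plus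
`e_F → v` for every maximal hyperedge `F` and every `v ∈ F`. -/
def AugE (E : V → V → Prop) (H : Set (Set V)) :
    V ⊕ {F : Set V // MaximalHyperedge H F} →
    V ⊕ {F : Set V // MaximalHyperedge H F} → Prop
  | .inl v, .inl w => E v w
  | .inr F, .inl v => v ∈ F.1
  | _, _ => False

/-- the trivial simplicial complex (only subsingleton hyperedges), making a directed
graph a HEDG without bidirected edges. -/
def TrivialH (W : Type*) : Set (Set W) := {F | Set.Subsingleton F}

/-- directed edges of the acyclification of a HEDG. -/
def AcyE (E : V → V → Prop) : V → V → Prop :=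
  fun v w => ¬ InSC E v w ∧ ∃ w', InSC E w w' ∧ E v w'

/-- hyperedges of the acyclification of a HEDG. -/
def AcyH (E : V → V → Prop) (H : Set (Set V)) : Set (Set V) :=
  {F' | ∃ F ∈ H, ∀ x ∈ F', ∃ v ∈ F, InSC E v x}

/-! A directed path of `G` between two nodes outside `U` splits at its visits outside `U` into
segments whose interior nodes all lie in `U`, and each such segment is an edge of the
marginalization; conversely every edge of the marginalization unfolds to a directed path of `G`. -/

section Marginalization

variable {E : V → V → Prop} {U : Set V}

theorem reach_of_margE {a b : V} (hab : MargE E U a b) : Reach E a b := by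
  obtain ⟨-, -, c, hac, hcb⟩ := hab
  exact (Relation.ReflTransGen.mono (fun _ _ h => h.1) _ _ hac).tail hcb

theorem reach_of_reach_margE {a b : V} (hab : Reach (MargE E U) a b) : Reach E a b :=
  hab.lift' id fun _ _ h => reach_of_margE h

/-- The invariant of the splitting: `p` is the last node outside `U` visited so far, and the
path has reached `a` from `p` through `U`. -/
theorem reach_margE_of_reflTransGen_of_reach {p a b : V} (hp : p ∉ U) (hb : b ∉ U)
    (hpa : Relation.ReflTransGen (fun x y => E x y ∧ y ∈ U) p a) (hab : Reach E a b) :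
    Reach (MargE E U) p b := by
  induction hab using Relation.ReflTransGen.head_induction_on generalizing p with
  | refl =>
    rcases hpa.cases_tail with rfl | ⟨c, -, -, hbU⟩
    · exact .refl
    · exact absurd hbU hb
  | @head a c hac _ ih =>
    by_cases hc : c ∈ U
    · exact ih hp (hpa.tail ⟨hac, hc⟩)
    · exact .head ⟨hp, hc, a, hpa, hac⟩ (ih hc .refl)

theorem reach_margE_of_reach {a b : V} (ha : a ∉ U) (hb : b ∉ U) (hab : Reach E a b) :
    Reach (MargE E U) a b :=
  reach_margE_of_reflTransGen_of_reach ha hb .refl hab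

end Marginalization

theorem marginalization_preserves_ancestors_general {V : Type*}
    (E : V → V → Prop)
    (W : Set V) (v w : V) (hv : v ∈ W) (hw : w ∈ W) :
    Reach E v w ↔ Reach (MargE E Wᶜ) v w :=
  ⟨reach_margE_of_reach (not_not_intro hv) (not_not_intro hw), reach_of_reach_margE⟩

/-- Marginalization of a HEDG preserves ancestral relations: for nodes
`v, w` of the marginalization `G^marg` of `G` onto `W`, `v` is an ancestor of `w` in `G`
iff `v` is an ancestor of `w` in `G^marg`. -/
theorem marginalization_preserves_ancestors {V : Type*} [Fintype V]
    (E : V → V → Prop) (H : Set (Set V)) (hH : IsSimplicial H)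
    (W : Set V) (v w : V) (hv : v ∈ W) (hw : w ∈ W) :
    Reach E v w ↔ Reach (MargE E Wᶜ) v w :=
  marginalization_preserves_ancestors_general E W v w hv hw

end HedgPaper
end

section
/- Marginalizations of a HEDG with respect to disjoint subsets commute: if G=(V,E,H) is a HEDG and U₁, U₂ ⊆ V are disjoint, then (G^{marg∖U₁})^{marg∖U₂} = G^{marg∖(U₁∪U₂)} = (G^{marg∖U₂})^{marg∖U₁}. -/
namespace HedgPaper

variable {V : Type*}

/-! A directed path with interior in `U₁ ∪ U₂` is cut, at its visits to `U₂ ∖ U₁`, into segments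
with interior in `U₁`, which are exactly the edges of `G^{marg∖U₁}`; conversely, expanding every
edge of `G^{marg∖U₁}` on a path through `U₂` gives a path through `U₁ ∪ U₂`. For hyperedges,
a hyperedge `F'` of `G^{marg∖(U₁∪U₂)}` coming from `F ∈ H` is obtained in two steps through the
hyperedge of `G^{marg∖U₁}` formed by the nodes of `F' ∪ U₂` outside `U₁` that are reached from `F`. -/

def PathThrough (E : V → V → Prop) (U : Set V) (a b : V) : Prop :=
  ∃ c, Relation.ReflTransGen (fun x y => E x y ∧ y ∈ U) a c ∧ E c b

def MargReach (E : V → V → Prop) (U F : Set V) : Set V :=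
  {v | (v ∈ F ∧ v ∉ U) ∨ ∃ u ∈ F ∩ U, PathThrough E U u v}

variable {E : V → V → Prop} {H : Set (Set V)} {U U₁ U₂ : Set V} {a b : V}

theorem margE_iff : MargE E U a b ↔ a ∉ U ∧ b ∉ U ∧ PathThrough E U a b := Iff.rfl

theorem mem_margH_iff {F' : Set V} :
    F' ∈ MargH E H U ↔ (∀ v ∈ F', v ∉ U) ∧ ∃ F ∈ H, F ⊆ F' ∪ U ∧ F' ⊆ MargReach E U F :=
  Iff.rfl

namespace PathThrough

theorem of_edge (h : E a b) : PathThrough E U a b := ⟨a, .refl, h⟩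

theorem mono (hU : U₁ ⊆ U₂) (h : PathThrough E U₁ a b) : PathThrough E U₂ a b := by
  obtain ⟨c, hac, hcb⟩ := h
  exact ⟨c, Relation.ReflTransGen.mono (fun _ _ hxy => ⟨hxy.1, hU hxy.2⟩) _ _ hac, hcb⟩

theorem trans {u : V} (hau : PathThrough E U a u) (hu : u ∈ U) (hub : PathThrough E U u b) :
    PathThrough E U a b := by
  obtain ⟨c₁, hac₁, hc₁u⟩ := hau
  obtain ⟨c₂, huc₂, hc₂b⟩ := hub
  exact ⟨c₂, (hac₁.tail ⟨hc₁u, hu⟩).trans huc₂, hc₂b⟩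

theorem left_notMem_of_margE (h : PathThrough (MargE E U₁) U₂ a b) : a ∉ U₁ := by
  obtain ⟨c, hac, hcb⟩ := h
  rcases hac.cases_head with rfl | ⟨_, hab, _⟩
  exacts [hcb.1, hab.1.1]

theorem right_notMem_of_margE (h : PathThrough (MargE E U₁) U₂ a b) : b ∉ U₁ :=
  h.choose_spec.2.2.1

theorem of_margE (h : PathThrough (MargE E U₁) U₂ a b) : PathThrough E (U₁ ∪ U₂) a b := by
  obtain ⟨c, hac, hcb⟩ := h
  induction hac using Relation.ReflTransGen.head_induction_on with
  | refl => exact mono Set.subset_union_left hcb.2.2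
  | head hxy _ ih => exact (mono Set.subset_union_left hxy.1.2.2).trans (.inr hxy.2) ih

theorem exists_last_exit (ha : a ∉ U₁) {x : V}
    (h : Relation.ReflTransGen (fun x y => E x y ∧ y ∈ U₁ ∪ U₂) a x) :
    ∃ d ∉ U₁, Relation.ReflTransGen (fun x y => MargE E U₁ x y ∧ y ∈ U₂) a d ∧
      Relation.ReflTransGen (fun x y => E x y ∧ y ∈ U₁) d x := by
  induction h with
  | refl => exact ⟨a, ha, .refl, .refl⟩
  | @tail y z _ hyz ih =>
    obtain ⟨d, hd, had, hdy⟩ := ih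
    by_cases hz : z ∈ U₁
    · exact ⟨d, hd, had, hdy.tail ⟨hyz.1, hz⟩⟩
    · have hz₂ : z ∈ U₂ := hyz.2.resolve_left hz
      exact ⟨z, hz, had.tail ⟨⟨hd, hz, y, hdy, hyz.1⟩, hz₂⟩, .refl⟩

theorem to_margE (ha : a ∉ U₁) (hb : b ∉ U₁) (h : PathThrough E (U₁ ∪ U₂) a b) :
    PathThrough (MargE E U₁) U₂ a b := by
  obtain ⟨c, hac, hcb⟩ := h
  obtain ⟨d, hd, had, hdc⟩ := exists_last_exit ha hac
  exact ⟨d, had, hd, hb, c, hdc, hcb⟩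

theorem exists_first_exit (h : PathThrough E (U₁ ∪ U₂) a b) :
    PathThrough E U₁ a b ∨
      ∃ w ∈ U₂, w ∉ U₁ ∧ PathThrough E U₁ a w ∧ PathThrough E (U₁ ∪ U₂) w b := by
  obtain ⟨c, hac, hcb⟩ := h
  induction hac using Relation.ReflTransGen.head_induction_on with
  | refl => exact .inl (of_edge hcb)
  | @head x y hxy hyc ih =>
    by_cases hy : y ∈ U₁
    · rcases ih with hyb | ⟨w, hw₂, hw₁, hyw, hwb⟩
      · exact .inl ((of_edge hxy.1).trans hy hyb)
      · exact .inr ⟨w, hw₂, hw₁, (of_edge hxy.1).trans hy hyw, hwb⟩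
    · exact .inr ⟨y, hxy.2.resolve_left hy, hy, of_edge hxy.1, c, hyc, hcb⟩

end PathThrough

theorem margE_margE : MargE (MargE E U₁) U₂ = MargE E (U₁ ∪ U₂) := by
  ext a b
  simp only [margE_iff, Set.mem_union, not_or]
  constructor
  · rintro ⟨ha₂, hb₂, h⟩
    exact ⟨⟨h.left_notMem_of_margE, ha₂⟩, ⟨h.right_notMem_of_margE, hb₂⟩, h.of_margE⟩
  · rintro ⟨⟨ha₁, ha₂⟩, ⟨hb₁, hb₂⟩, h⟩
    exact ⟨ha₂, hb₂, h.to_margE ha₁ hb₁⟩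

theorem margReach_margE_subset {F G : Set V} (hG : G ⊆ MargReach E U₁ F) :
    MargReach (MargE E U₁) U₂ G ⊆ MargReach E (U₁ ∪ U₂) F := by
  rintro v (⟨hvG, hv₂⟩ | ⟨u, ⟨huG, hu₂⟩, huv⟩)
  · rcases hG hvG with ⟨hvF, hv₁⟩ | ⟨u, ⟨huF, hu₁⟩, huv⟩
    · exact .inl ⟨hvF, fun h => h.elim hv₁ hv₂⟩
    · exact .inr ⟨u, ⟨huF, .inl hu₁⟩, huv.mono Set.subset_union_left⟩
  · rcases hG huG with ⟨huF, -⟩ | ⟨w, ⟨hwF, hw₁⟩, hwu⟩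
    · exact .inr ⟨u, ⟨huF, .inr hu₂⟩, huv.of_margE⟩
    · exact .inr ⟨w, ⟨hwF, .inl hw₁⟩,
        (hwu.mono Set.subset_union_left).trans (.inr hu₂) huv.of_margE⟩

theorem mem_margReach_margE {F S : Set V} {v : V} (h : v ∈ MargReach E (U₁ ∪ U₂) F)
    (hvS : v ∈ S) (hv₁ : v ∉ U₁) (hv₂ : v ∉ U₂) :
    v ∈ MargReach (MargE E U₁) U₂ (((S ∪ U₂) ∩ MargReach E U₁ F) \ U₁) := by
  rcases h with ⟨hvF, -⟩ | ⟨u, ⟨huF, hu⟩, huv⟩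
  · exact .inl ⟨⟨⟨.inl hvS, .inl ⟨hvF, hv₁⟩⟩, hv₁⟩, hv₂⟩
  by_cases hu₁ : u ∈ U₁
  · rcases huv.exists_first_exit with huv | ⟨w, hw₂, hw₁, huw, hwv⟩
    · exact .inl ⟨⟨⟨.inl hvS, .inr ⟨u, ⟨huF, hu₁⟩, huv⟩⟩, hv₁⟩, hv₂⟩
    · exact .inr ⟨w, ⟨⟨⟨.inr hw₂, .inr ⟨u, ⟨huF, hu₁⟩, huw⟩⟩, hw₁⟩, hw₂⟩,
        hwv.to_margE hw₁ hv₁⟩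
  · have hu₂ : u ∈ U₂ := hu.resolve_left hu₁
    exact .inr ⟨u, ⟨⟨⟨.inr hu₂, .inl ⟨huF, hu₁⟩⟩, hu₁⟩, hu₂⟩, huv.to_margE hu₁ hv₁⟩

theorem diff_mem_margH {F F' : Set V} (hF : F ∈ H) (hFF' : F ⊆ F' ∪ (U₁ ∪ U₂)) :
    ((F' ∪ U₂) ∩ MargReach E U₁ F) \ U₁ ∈ MargH E H U₁ := by
  refine ⟨fun v hv => hv.2, F, hF, fun x hxF => ?_, fun v hv => hv.1.2⟩
  by_cases hx₁ : x ∈ U₁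
  · exact .inr hx₁
  · have hx : x ∈ F' ∪ U₂ := by
      rcases hFF' hxF with hx | hx | hx
      exacts [.inl hx, absurd hx hx₁, .inr hx]
    exact .inl ⟨⟨hx, .inl ⟨hxF, hx₁⟩⟩, hx₁⟩

theorem margH_margH : MargH (MargE E U₁) (MargH E H U₁) U₂ = MargH E H (U₁ ∪ U₂) := by
  ext F'
  simp only [mem_margH_iff]
  constructor
  · rintro ⟨hF'₂, G, ⟨hG₁, F, hF, hFG, hGF⟩, hGF', hF'G⟩
    refine ⟨fun v hv hv' => ?_, F, hF, ?_, hF'G.trans (margReach_margE_subset hGF)⟩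
    · rcases hF'G hv with ⟨hvG, -⟩ | ⟨_, -, huv⟩
      · exact hv'.elim (hG₁ v hvG) (hF'₂ v hv)
      · exact hv'.elim huv.right_notMem_of_margE (hF'₂ v hv)
    · intro x hx
      rcases hFG hx with hxG | hx₁
      · rcases hGF' hxG with hxF' | hx₂
        exacts [.inl hxF', .inr (.inr hx₂)]
      · exact .inr (.inl hx₁)
  · rintro ⟨hF'U, F, hF, hFF', hF'F⟩
    have hv₁ : ∀ v ∈ F', v ∉ U₁ := fun v hv h => hF'U v hv (.inl h)
    have hv₂ : ∀ v ∈ F', v ∉ U₂ := fun v hv h => hF'U v hv (.inr h)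
    exact ⟨hv₂, _, diff_mem_margH hF hFF', fun v hv => hv.1.1,
      fun v hv => mem_margReach_margE (hF'F hv) hv (hv₁ v hv) (hv₂ v hv)⟩

theorem marginalizations_commute_general {V : Type*}
    (E : V → V → Prop) (H : Set (Set V))
    (U₁ U₂ : Set V) :
    MargE (MargE E U₁) U₂ = MargE E (U₁ ∪ U₂) ∧
    MargE (MargE E U₂) U₁ = MargE E (U₁ ∪ U₂) ∧
    MargH (MargE E U₁) (MargH E H U₁) U₂ = MargH E H (U₁ ∪ U₂) ∧
    MargH (MargE E U₂) (MargH E H U₂) U₁ = MargH E H (U₁ ∪ U₂) :=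
  ⟨margE_margE, Set.union_comm U₂ U₁ ▸ margE_margE,
    margH_margH, Set.union_comm U₂ U₁ ▸ margH_margH⟩

/-- Marginalizations of a HEDG with respect to disjoint subsets
commute: `(G^{marg∖U₁})^{marg∖U₂} = G^{marg∖(U₁∪U₂)} = (G^{marg∖U₂})^{marg∖U₁}`,
both on the level of directed edges and of hyperedges. -/
theorem marginalizations_commute {V : Type*} [Fintype V]
    (E : V → V → Prop) (H : Set (Set V)) (hH : IsSimplicial H)
    (U₁ U₂ : Set V) (hdisj : Disjoint U₁ U₂) :
    MargE (MargE E U₁) U₂ = MargE E (U₁ ∪ U₂) ∧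
    MargE (MargE E U₂) U₁ = MargE E (U₁ ∪ U₂) ∧
    MargH (MargE E U₁) (MargH E H U₁) U₂ = MargH E H (U₁ ∪ U₂) ∧
    MargH (MargE E U₂) (MargH E H U₂) U₁ = MargH E H (U₁ ∪ U₂) :=
  marginalizations_commute_general E H U₁ U₂

end HedgPaper
end

section
/- If A is an ancestral subset of a HEDG G (i.e., A = Anc^G(A)), then the induced sub-HEDG structure on A coincides with the marginalized HEDG structure on A: G(A) = G^{marg(A)}. -/
namespace HedgPaper

variable {V : Type*}

theorem reach_of_reflTransGen_of_edge {E : V → V → Prop} {U : Set V} {u c v : V}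
    (hchain : Relation.ReflTransGen (fun x y => E x y ∧ y ∈ U) u c) (hcv : E c v) :
    Reach E u v :=
  (Relation.ReflTransGen.mono (fun _ _ h => h.1) _ _ hchain).tail hcv

theorem inducedE_le_margE (E : V → V → Prop) (A : Set V) : InducedE E A ≤ MargE E Aᶜ :=
  fun _ _ ⟨ha, hb, hab⟩ => ⟨not_not_intro ha, not_not_intro hb, _, .refl, hab⟩

theorem inducedH_subset_margH (E : V → V → Prop) (H : Set (Set V)) (A : Set V) :
    InducedH H A ⊆ MargH E H Aᶜ :=
  fun F ⟨hFH, hFA⟩ => ⟨fun _ hv => not_not_intro (hFA hv), F, hFH, Set.subset_union_left,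
    fun _ hv => .inl ⟨hv, not_not_intro (hFA hv)⟩⟩

/- Every node with a directed path into an ancestral set lies in it, so the detours through the
marginalized nodes `Aᶜ` in `MargE` and `MargH` are all empty. -/
theorem margE_le_inducedE {E : V → V → Prop} {A : Set V}
    (hanc : ∀ a ∈ A, ∀ u : V, Reach E u a → u ∈ A) : MargE E Aᶜ ≤ InducedE E A := by
  rintro a b ⟨ha, hb, c, hchain, hcb⟩
  rw [Set.notMem_compl_iff] at ha hb
  rcases hchain.cases_tail with rfl | ⟨d, _, _, hcA⟩
  · exact ⟨ha, hb, hcb⟩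
  · exact absurd (hanc b hb c (.single hcb)) hcA

theorem margH_subset_inducedH {E : V → V → Prop} {H : Set (Set V)} {A : Set V}
    (hH : ∀ F ∈ H, ∀ F' : Set V, F' ⊆ F → F' ∈ H)
    (hanc : ∀ a ∈ A, ∀ u : V, Reach E u a → u ∈ A) : MargH E H Aᶜ ⊆ InducedH H A := by
  rintro F' ⟨hF'compl, F, hFH, -, hcover⟩
  have hF'A : F' ⊆ A := fun v hv => Set.notMem_compl_iff.mp (hF'compl v hv)
  refine ⟨hH F hFH F' fun v hv => ?_, hF'A⟩
  rcases hcover v hv with ⟨hvF, -⟩ | ⟨u, ⟨-, huA⟩, c, hchain, hcv⟩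
  · exact hvF
  · exact absurd (hanc v (hF'A hv) u (reach_of_reflTransGen_of_edge hchain hcv)) huA

theorem ancestral_induced_eq_marginalized_general {V : Type*}
    (E : V → V → Prop) (H : Set (Set V)) (hH : IsSimplicial H)
    (A : Set V) (hanc : ∀ a ∈ A, ∀ u : V, Reach E u a → u ∈ A) :
    InducedE E A = MargE E Aᶜ ∧ InducedH H A = MargH E H Aᶜ :=
  ⟨le_antisymm (inducedE_le_margE E A) (margE_le_inducedE hanc),
    (inducedH_subset_margH E H A).antisymm (margH_subset_inducedH hH.2 hanc)⟩

/-- If `A` is an ancestral subset of a HEDG `G` (closed under taking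
ancestors), then the induced sub-HEDG structure on `A` coincides with the marginalized
HEDG structure on `A`: same directed edges and same hyperedges. -/
theorem ancestral_induced_eq_marginalized {V : Type*} [Fintype V]
    (E : V → V → Prop) (H : Set (Set V)) (hH : IsSimplicial H)
    (A : Set V) (hanc : ∀ a ∈ A, ∀ u : V, Reach E u a → u ∈ A) :
    InducedE E A = MargE E Aᶜ ∧ InducedH H A = MargH E H Aᶜ :=
  ancestral_induced_eq_marginalized_general E H hH A hanc

end HedgPaper
end

section
/- d-separation in a HEDG is stable under marginalization: for a HEDG G=(V,E,H) and subsets X,Y,Z,U ⊆ V with U ∩ (X∪Y∪Z) = ∅, X is d-separated from Y given Z in G if and only if X is d-separated from Y given Z in the marginalization G^{marg∖U}. -/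
namespace HedgPaper

variable {V : Type*}

/-!
Open walks are recorded as paths in a graph on states `(v, h)`, where `h` says whether the walk
arrives at `v` with an arrowhead; openness at `v` then only depends on `h` and the mark of the next
edge at `v`.

A marginal edge `a ⋯ b` unfolds into a walk of `G` whose interior nodes lie in `U`, hence outside
`Z`, and are non-colliders, so marginally open walks unfold into open walks of `G`. Conversely, on
an open walk of `G` every collider `u ∈ U` is an ancestor of `Z` but not in `Z`, so it can be
replaced by a detour `u → ⋯ → z ← ⋯ ← u` to the first node `z ∈ Z`. Afterwards each maximal run of
`U`-nodes is collider-free, hence of the shape `a → U* → b`, `a ← U* ← b` or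
`a ← U* ← u (↔ u')? → U* → b`, which are exactly the edges of the marginalization.
-/

open Relation

def EDir.headSrc : EDir → Bool
  | .fwd => false
  | _ => true

def EDir.headDst : EDir → Bool
  | .bwd => false
  | _ => true

/-- Openness of a walk at `v` when it arrives with mark `h` and leaves with mark `d` (`true` for an
arrowhead at `v`). `A` is the set of admissible colliders: the ancestors of `Z` for d-connection,
a smaller set when colliders in `U` are to be excluded. -/
def JunctionOpen (A Z : Set V) (v : V) : Bool → Bool → Prop
  | true, true => v ∈ A
  | _, _ => v ∉ Z

/-- One step of an open walk, on states `(v, h)` with `h` the arrowhead mark at `v` on arrival. -/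
def OpenStep (E : V → V → Prop) (H : Set (Set V)) (A Z : Set V) (p q : V × Bool) : Prop :=
  ∃ e : EDir, Step.Valid E H ⟨p.1, e, q.1⟩ ∧ e.headDst = q.2 ∧
    JunctionOpen A Z p.1 p.2 e.headSrc

abbrev ReachVia (E : V → V → Prop) (U : Set V) : V → V → Prop :=
  ReflTransGen (fun x y => E x y ∧ y ∈ U)

def Anchored (E : V → V → Prop) (U F : Set V) (v : V) : Prop :=
  v ∈ F ∨ ∃ u ∈ F ∩ U, ∃ c, ReachVia E U u c ∧ E c v

/-- An edge of the marginalization without the conditions `a, b ∉ U` (and `a ≠ b` if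
bidirected); with `b ∈ U` it describes an unfinished run of `U`-nodes. -/
def MargLink (E : V → V → Prop) (H : Set (Set V)) (U : Set V) : V → EDir → V → Prop
  | a, .fwd, b => ∃ c, ReachVia E U a c ∧ E c b
  | a, .bwd, b => ∃ c, ReachVia E U b c ∧ E c a
  | a, .bi, b => ∃ F ∈ H, F ⊆ {a, b} ∪ U ∧ Anchored E U F a ∧ Anchored E U F b

abbrev MargOpenStep (E : V → V → Prop) (H : Set (Set V)) (U Z : Set V) :
    V × Bool → V × Bool → Prop :=
  OpenStep (MargE E U) (MargH E H U) (AncSet (MargE E U) Z) Z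

section JunctionOpen

variable {A A' U Z : Set V} {v : V} {h d : Bool}

@[simp]
lemma junctionOpen_false_left : JunctionOpen A Z v false d ↔ v ∉ Z := by
  cases d <;> rfl

@[simp]
lemma junctionOpen_true_true : JunctionOpen A Z v true true ↔ v ∈ A := Iff.rfl

@[simp]
lemma junctionOpen_false_right : JunctionOpen A Z v h false ↔ v ∉ Z := by
  cases h <;> rfl

lemma JunctionOpen.mono (hA : A ⊆ A') (hJ : JunctionOpen A Z v h d) :
    JunctionOpen A' Z v h d := by
  cases h <;> cases d
  all_goals first | exact hJ | exact hA hJ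

lemma JunctionOpen.diff (hJ : JunctionOpen A Z v h d) (hcol : ¬ (v ∈ U ∧ h = true ∧ d = true)) :
    JunctionOpen (A \ U) Z v h d := by
  cases h <;> cases d
  all_goals first | exact hJ | exact ⟨hJ, fun hv => hcol ⟨hv, rfl, rfl⟩⟩

lemma JunctionOpen.of_loop (hA : A ⊆ A') (hout : JunctionOpen A' Z v h true)
    (hin : JunctionOpen A Z v true d) : JunctionOpen A' Z v h d := by
  cases h
  · simpa using hout
  · exact hin.mono hA

end JunctionOpen

section Walks

variable {E : V → V → Prop} {H : Set (Set V)} {X Y Z : Set V}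

lemma junctionOpen_iff (s t : Step V) :
    JunctionOpen (AncSet E Z) Z s.dst s.dir.headDst t.dir.headSrc ↔
      ((s.HeadAtDst ∧ t.HeadAtSrc) → s.dst ∈ AncSet E Z) ∧
        (¬ (s.HeadAtDst ∧ t.HeadAtSrc) → s.dst ∉ Z) := by
  obtain ⟨_, ds, _⟩ := s
  obtain ⟨_, dt, _⟩ := t
  cases ds <;> cases dt <;> simp [Step.HeadAtDst, Step.HeadAtSrc, EDir.headDst, EDir.headSrc]

lemma dInteriorOpen_cons (s : Step V) (l : List (Step V)) :
    DInteriorOpen E Z (s :: l) ↔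
      (∀ t ∈ l.head?, JunctionOpen (AncSet E Z) Z s.dst s.dir.headDst t.dir.headSrc) ∧
        DInteriorOpen E Z l := by
  cases l with
  | nil => simp [DInteriorOpen]
  | cons t l => simp [DInteriorOpen, junctionOpen_iff, and_assoc]

lemma exists_reach_iff_exists_walk {x y : V} {a : Bool} :
    (∃ b, ReflTransGen (OpenStep E H (AncSet E Z) Z) (x, a) (y, b)) ↔
      ∃ l, IsWalk E H l x y ∧ DInteriorOpen E Z l ∧
        ∀ s ∈ l.head?, JunctionOpen (AncSet E Z) Z x a s.dir.headSrc := by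
  constructor
  · rintro ⟨b, hr⟩
    generalize hp : (x, a) = p at hr
    induction hr using ReflTransGen.head_induction_on generalizing x a with
    | refl => cases hp; exact ⟨[], rfl, trivial, by simp⟩
    | head hs _ ih =>
      cases hp
      obtain ⟨e, he, hdst, hJ⟩ := hs
      obtain ⟨l, hw, hio, hhead⟩ := ih rfl
      refine ⟨⟨x, e, _⟩ :: l, ⟨rfl, he, hw⟩, (dInteriorOpen_cons _ _).2 ⟨?_, hio⟩, by simpa using hJ⟩
      simpa [hdst] using hhead
  · rintro ⟨l, hw, hio, hhead⟩
    induction l generalizing x a with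
    | nil => cases hw; exact ⟨a, .refl⟩
    | cons s l ih =>
      obtain ⟨rfl, he, hw⟩ := hw
      rw [dInteriorOpen_cons] at hio
      obtain ⟨b, hr⟩ := ih hw hio.2 hio.1
      exact ⟨b, .head ⟨s.dir, he, rfl, hhead s rfl⟩ hr⟩

lemma dSep_iff_reach :
    DSep E H X Y Z ↔ ∀ x ∈ X, ∀ y ∈ Y, ∀ b,
      ReflTransGen (OpenStep E H (AncSet E Z) Z) (x, false) (y, b) → x ∉ Z → y ∈ Z := by
  constructor
  · intro hsep x hx y hy b hr hxZ
    by_contra hyZ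
    obtain ⟨l, hw, hio, -⟩ := exists_reach_iff_exists_walk.1 ⟨b, hr⟩
    exact hsep x hx y hy l hw ⟨hxZ, hyZ, hio⟩
  · rintro hreach x hx y hy l hw ⟨hxZ, hyZ, hio⟩
    obtain ⟨b, hr⟩ := (exists_reach_iff_exists_walk (a := false)).2
      ⟨l, hw, hio, fun _ _ => by simpa using hxZ⟩
    exact hyZ (hreach x hx y hy b hr hxZ)

end Walks

section Ancestors

variable {E : V → V → Prop} {U Z : Set V}

lemma reflTransGen_of_margE {a b : V} (h : MargE E U a b) : ReflTransGen E a b := by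
  obtain ⟨-, -, c, hac, hcb⟩ := h
  exact (ReflTransGen.mono (fun _ _ h => h.1) _ _ hac).tail hcb

lemma ancSet_margE_subset : AncSet (MargE E U) Z ⊆ AncSet E Z := by
  rintro v ⟨z, hz, hvz⟩
  exact ⟨z, hz, ReflTransGen.lift' id (fun _ _ => reflTransGen_of_margE) _ _ hvz⟩

lemma reflTransGen_margE {a b : V} (h : ReflTransGen E a b) (ha : a ∉ U) (hb : b ∉ U) :
    ReflTransGen (MargE E U) a b := by
  have key : ∀ c, ReflTransGen E a c →
      ∃ d, d ∉ U ∧ ReflTransGen (MargE E U) a d ∧ ReachVia E U d c := by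
    intro c hc
    induction hc with
    | refl => exact ⟨a, ha, .refl, .refl⟩
    | @tail c c' _ hcc' ih =>
      obtain ⟨d, hd, had, hdc⟩ := ih
      by_cases hc' : c' ∈ U
      · exact ⟨d, hd, had, hdc.tail ⟨hcc', hc'⟩⟩
      · exact ⟨c', hc', had.tail ⟨hd, hc', c, hdc, hcc'⟩, .refl⟩
  obtain ⟨d, -, had, hdb⟩ := key b h
  obtain rfl | ⟨_, -, -, hbU⟩ := (ReflTransGen.cases_tail_iff _ _ _).1 hdb
  · exact had
  · exact absurd hbU hb

lemma ancSet_diff_subset_ancSet_margE (hUZ : Disjoint U Z) :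
    AncSet E Z \ U ⊆ AncSet (MargE E U) Z := by
  rintro v ⟨⟨z, hz, hvz⟩, hvU⟩
  exact ⟨z, hz, reflTransGen_margE hvz hvU (hUZ.notMem_of_mem_right hz)⟩

end Ancestors

section MargLink

variable {E : V → V → Prop} {H : Set (Set V)} {U : Set V}

lemma valid_marg_iff {a b : V} {e : EDir} :
    Step.Valid (MargE E U) (MargH E H U) ⟨a, e, b⟩ ↔
      a ∉ U ∧ b ∉ U ∧ (e = .bi → a ≠ b) ∧ MargLink E H U a e b := by
  cases e with
  | fwd => simp [Step.Valid, MargE, MargLink]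
  | bwd => simp only [Step.Valid, MargE, MargLink]; tauto
  | bi =>
    simp only [Step.Valid, MargH, MargLink, Anchored, Set.mem_ofPred_eq, Set.forall_mem_insert,
      Set.mem_singleton_iff, forall_eq, true_implies]
    constructor
    · rintro ⟨hne, ⟨ha, hb⟩, F, hF, hsub, hFa, hFb⟩
      exact ⟨ha, hb, hne, F, hF, hsub, hFa.imp_left And.left, hFb.imp_left And.left⟩
    · rintro ⟨ha, hb, hne, F, hF, hsub, hFa, hFb⟩
      exact ⟨hne, ⟨ha, hb⟩, F, hF, hsub, hFa.imp_left (⟨·, ha⟩), hFb.imp_left (⟨·, hb⟩)⟩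

lemma margLink_of_valid {v w : V} {e : EDir} (he : Step.Valid E H ⟨v, e, w⟩) :
    MargLink E H U v e w := by
  cases e with
  | fwd => exact ⟨v, .refl, he⟩
  | bwd => exact ⟨w, .refl, he⟩
  | bi => exact ⟨{v, w}, he.2, Set.subset_union_left, .inl (Set.mem_insert _ _),
      .inl (Set.mem_insert_of_mem _ rfl)⟩

lemma Anchored.of_edge {F : Set V} {u w : V} (hu : Anchored E U F u) (huU : u ∈ U) (huw : E u w) :
    Anchored E U F w := by
  rcases hu with huF | ⟨u', hu', c, hu'c, hcu⟩
  · exact .inr ⟨u, ⟨huF, huU⟩, u, .refl, huw⟩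
  · exact .inr ⟨u', hu', u, hu'c.tail ⟨hcu, huU⟩, huw⟩

lemma MargLink.extend (hH : IsSimplicial H) {a u w : V} {c e : EDir} (hlink : MargLink E H U a c u)
    (hu : u ∈ U) (he : Step.Valid E H ⟨u, e, w⟩) (hcol : ¬ (c.headDst = true ∧ e.headSrc = true)) :
    ∃ c', c'.headSrc = c.headSrc ∧ c'.headDst = e.headDst ∧ MargLink E H U a c' w := by
  cases c <;> cases e <;> simp only [EDir.headDst, EDir.headSrc, and_self,
    not_true_eq_false] at hcol
  · obtain ⟨k, hak, hku⟩ := hlink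
    exact ⟨.fwd, rfl, rfl, u, hak.tail ⟨hku, hu⟩, he⟩
  · -- a turn `a ← ⋯ ← u → w` is bidirected in the marginalization, through the face `{u}`
    obtain ⟨k, huk, hka⟩ := hlink
    refine ⟨.bi, rfl, rfl, {u}, hH.1 u, fun x hx => .inr (hx ▸ hu), ?_, ?_⟩
    · exact .inr ⟨u, ⟨rfl, hu⟩, k, huk, hka⟩
    · exact .inr ⟨u, ⟨rfl, hu⟩, u, .refl, he⟩
  · obtain ⟨k, huk, hka⟩ := hlink
    exact ⟨.bwd, rfl, rfl, k, huk.head ⟨he, hu⟩, hka⟩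
  · obtain ⟨k, huk, hka⟩ := hlink
    refine ⟨.bi, rfl, rfl, {u, w}, he.2, ?_, ?_, .inl (Set.mem_insert_of_mem _ rfl)⟩
    · rintro x (rfl | rfl)
      exacts [.inr hu, .inl (.inr rfl)]
    · exact .inr ⟨u, ⟨Set.mem_insert _ _, hu⟩, k, huk, hka⟩
  · obtain ⟨F, hF, hsub, hFa, hFu⟩ := hlink
    refine ⟨.bi, rfl, rfl, F, hF, fun x hx => ?_, hFa, hFu.of_edge hu he⟩
    rcases hsub hx with (rfl | rfl) | hxU
    exacts [.inl (.inl rfl), .inr hu, .inr hxU]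

end MargLink

section Expansion

variable {E : V → V → Prop} {H : Set (Set V)} {A U Z : Set V}

lemma reach_of_reachVia_fwd (hUZ : Disjoint U Z) {p k w : V} (hpk : ReachVia E U p k)
    (hkw : E k w) (hp : p ∉ Z) (h : Bool) :
    ReflTransGen (OpenStep E H A Z) (p, h) (w, true) := by
  induction hpk using ReflTransGen.head_induction_on generalizing h with
  | refl => exact .single ⟨.fwd, hkw, rfl, junctionOpen_false_right.2 hp⟩
  | head hpp' _ ih =>
    exact .head (b := (_, true)) ⟨.fwd, hpp'.1, rfl, junctionOpen_false_right.2 hp⟩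
      (ih (hUZ.notMem_of_mem_left hpp'.2) true)

lemma reach_of_reachVia_bwd (hUZ : Disjoint U Z) {p k w : V} {h : Bool} (hwk : ReachVia E U w k)
    (hkp : E k p) (hJ : JunctionOpen A Z p h true) :
    ReflTransGen (OpenStep E H A Z) (p, h) (w, false) := by
  induction hwk using ReflTransGen.head_induction_on with
  | refl => exact .single ⟨.bwd, hkp, rfl, hJ⟩
  | head hww' _ ih =>
    exact ih.tail ⟨.bwd, hww'.1, rfl, by simpa using hUZ.notMem_of_mem_left hww'.2⟩

lemma openStep_bi {p q : V} {h : Bool} (hne : p ≠ q) (hpq : ({p, q} : Set V) ∈ H)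
    (hJ : JunctionOpen A Z p h true) : OpenStep E H A Z (p, h) (q, true) :=
  ⟨.bi, ⟨hne, hpq⟩, rfl, hJ⟩

lemma reach_of_valid_marg (hH : IsSimplicial H) (hUZ : Disjoint U Z) {a b : V} {e : EDir}
    {h : Bool} (he : Step.Valid (MargE E U) (MargH E H U) ⟨a, e, b⟩)
    (hJ : JunctionOpen A Z a h e.headSrc) :
    ReflTransGen (OpenStep E H A Z) (a, h) (b, e.headDst) := by
  obtain ⟨ha, hb, hne, hlink⟩ := valid_marg_iff.1 he
  have hnotZ : ∀ u ∈ U, u ∉ Z := fun u hu => hUZ.notMem_of_mem_left hu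
  cases e with
  | fwd =>
    obtain ⟨k, hak, hkb⟩ := hlink
    exact reach_of_reachVia_fwd hUZ hak hkb (junctionOpen_false_right.1 hJ) h
  | bwd =>
    obtain ⟨k, hbk, hka⟩ := hlink
    exact reach_of_reachVia_bwd hUZ hbk hka hJ
  | bi =>
    obtain ⟨F, hF, -, hFa, hFb⟩ := hlink
    have hface : ∀ p ∈ F, ∀ q ∈ F, ({p, q} : Set V) ∈ H := fun p hp q hq =>
      hH.2 F hF _ (Set.insert_subset hp (Set.singleton_subset_iff.2 hq))
    rcases hFa with haF | ⟨ua, ⟨huaF, huaU⟩, ka, huaka, hkaa⟩ <;>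
      rcases hFb with hbF | ⟨ub, ⟨hubF, hubU⟩, kb, hubkb, hkbb⟩
    · exact .single (openStep_bi (hne rfl) (hface a haF b hbF) hJ)
    · exact .head (openStep_bi (ne_of_mem_of_not_mem hubU ha).symm (hface a haF ub hubF) hJ)
        (reach_of_reachVia_fwd hUZ hubkb hkbb (hnotZ ub hubU) true)
    · exact (reach_of_reachVia_bwd hUZ huaka hkaa hJ).tail
        (openStep_bi (ne_of_mem_of_not_mem huaU hb) (hface ua huaF b hbF)
          (by simpa using hnotZ ua huaU))
    · refine (reach_of_reachVia_bwd hUZ huaka hkaa hJ).trans ?_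
      by_cases huab : ua = ub
      · exact reach_of_reachVia_fwd hUZ (huab ▸ hubkb) hkbb (hnotZ ua huaU) false
      · exact .head (openStep_bi huab (hface ua huaF ub hubF) (by simpa using hnotZ ua huaU))
          (reach_of_reachVia_fwd hUZ hubkb hkbb (hnotZ ub hubU) true)

lemma reach_of_margReach (hH : IsSimplicial H) (hUZ : Disjoint U Z) {p q : V × Bool}
    (hr : ReflTransGen (MargOpenStep E H U Z) p q) :
    ReflTransGen (OpenStep E H (AncSet E Z) Z) p q := by
  induction hr with
  | refl => exact .refl
  | @tail _ q _ hs ih =>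
    obtain ⟨e, he, hq, hJ⟩ := hs
    obtain ⟨w, h⟩ := q
    cases hq
    exact ih.trans (reach_of_valid_marg hH hUZ he (hJ.mono ancSet_margE_subset))

end Expansion

section Contraction

variable {E : V → V → Prop} {H : Set (Set V)} {U Z : Set V}

lemma reach_detour (hUZ : Disjoint U Z) {v : V} (hv : v ∈ AncSet E Z) (hvZ : v ∉ Z) :
    ReflTransGen (OpenStep E H (AncSet E Z \ U) Z) (v, true) (v, false) := by
  obtain ⟨z, hz, hvz⟩ := hv
  induction hvz using ReflTransGen.head_induction_on with
  | refl => exact absurd hz hvZ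
  | @head v w hvw _ ih =>
    have hdown : OpenStep E H (AncSet E Z \ U) Z (v, true) (w, true) :=
      ⟨.fwd, hvw, rfl, junctionOpen_false_right.2 hvZ⟩
    by_cases hw : w ∈ Z
    · exact .head hdown (.single ⟨.bwd, hvw, rfl, ⟨⟨w, hw, .refl⟩, hUZ.notMem_of_mem_right hw⟩⟩)
    · exact .head hdown ((ih hw).tail ⟨.bwd, hvw, rfl, junctionOpen_false_left.2 hw⟩)

lemma reach_diff_of_reach (hUZ : Disjoint U Z) {p q : V × Bool}
    (hr : ReflTransGen (OpenStep E H (AncSet E Z) Z) p q) :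
    ReflTransGen (OpenStep E H (AncSet E Z \ U) Z) p q := by
  induction hr with
  | refl => exact .refl
  | @tail q r _ hs ih =>
    refine ih.trans ?_
    obtain ⟨v, h⟩ := q
    obtain ⟨e, he, hr, hJ⟩ := hs
    by_cases hcol : v ∈ U ∧ h = true ∧ e.headSrc = true
    · obtain ⟨hvU, rfl, hsrc⟩ := hcol
      rw [hsrc] at hJ
      have hvZ : v ∉ Z := hUZ.notMem_of_mem_left hvU
      exact (reach_detour hUZ hJ hvZ).tail ⟨e, he, hr, by simpa [hsrc] using hvZ⟩
    · exact .single ⟨e, he, hr, hJ.diff hcol⟩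

/-- How the marginalization, started at `p`, keeps track of a state `q` of `G`: outside `U` by a
state at the same node that is at least as open, inside `U` by the last node `v ∉ U` reached and
the pending link from `v` to `q.1`. -/
def MargShadow (E : V → V → Prop) (H : Set (Set V)) (U Z : Set V) (p q : V × Bool) : Prop :=
  (q.1 ∉ U → ∃ h, ReflTransGen (MargOpenStep E H U Z) p (q.1, h) ∧
    ∀ d, JunctionOpen (AncSet E Z \ U) Z q.1 q.2 d →
      JunctionOpen (AncSet (MargE E U) Z) Z q.1 h d) ∧
  (q.1 ∈ U → ∃ v hv e, v ∉ U ∧ ReflTransGen (MargOpenStep E H U Z) p (v, hv) ∧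
    JunctionOpen (AncSet (MargE E U) Z) Z v hv e.headSrc ∧ e.headDst = q.2 ∧
      MargLink E H U v e q.1)

lemma MargShadow.step (hH : IsSimplicial H) (hUZ : Disjoint U Z) {p q r : V × Bool}
    (hq : MargShadow E H U Z p q) (hs : OpenStep E H (AncSet E Z \ U) Z q r) :
    MargShadow E H U Z p r := by
  obtain ⟨v, h⟩ := q
  obtain ⟨w, h'⟩ := r
  obtain ⟨e, he, rfl, hJ⟩ := hs
  obtain ⟨u, hu, c, huU, hr, hJu, hc, hlink⟩ : ∃ u hu c, u ∉ U ∧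
      ReflTransGen (MargOpenStep E H U Z) p (u, hu) ∧
      JunctionOpen (AncSet (MargE E U) Z) Z u hu c.headSrc ∧ c.headDst = e.headDst ∧
      MargLink E H U u c w := by
    by_cases hv : v ∈ U
    · obtain ⟨u, hu, c, huU, hr, hJu, rfl, hlink⟩ := hq.2 hv
      have hnocol : ¬ (c.headDst = true ∧ e.headSrc = true) := by
        rintro ⟨h1, h2⟩
        rw [h1, h2] at hJ
        exact hJ.2 hv
      obtain ⟨c', hsrc, hdst, hlink'⟩ := hlink.extend hH hv he hnocol
      exact ⟨u, hu, c', huU, hr, hsrc ▸ hJu, hdst, hlink'⟩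
    · obtain ⟨h', hr, hopen⟩ := hq.1 hv
      exact ⟨v, h', e, hv, hr, hopen _ hJ, rfl, margLink_of_valid he⟩
  have hanc := ancSet_diff_subset_ancSet_margE (E := E) hUZ
  refine ⟨fun hw => ?_, fun _ => ⟨u, hu, c, huU, hr, hJu, hc, hlink⟩⟩
  by_cases hloop : c = .bi ∧ u = w
  · -- a closed run `u ↔ ⋯ ↔ u` has no marginal edge, but can be dropped from the walk
    obtain ⟨rfl, rfl⟩ := hloop
    exact ⟨hu, hr, fun d hd => JunctionOpen.of_loop hanc hJu (hc ▸ hd)⟩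
  · have hval : Step.Valid (MargE E U) (MargH E H U) ⟨u, c, w⟩ :=
      valid_marg_iff.2 ⟨huU, hw, fun hbi heq => hloop ⟨hbi, heq⟩, hlink⟩
    exact ⟨e.headDst, hr.tail ⟨c, hval, hc, hJu⟩, fun _ hd => hd.mono hanc⟩

lemma exists_margReach_of_reach (hH : IsSimplicial H) (hUZ : Disjoint U Z) {x y : V}
    {a b : Bool} (hx : x ∉ U) (hy : y ∉ U)
    (hr : ReflTransGen (OpenStep E H (AncSet E Z) Z) (x, a) (y, b)) :
    ∃ b', ReflTransGen (MargOpenStep E H U Z) (x, a) (y, b') := by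
  have hshadow : ∀ q, ReflTransGen (OpenStep E H (AncSet E Z \ U) Z) (x, a) q →
      MargShadow E H U Z (x, a) q := by
    intro q hq
    induction hq with
    | refl => exact ⟨fun _ => ⟨a, .refl, fun _ hd => hd.mono
        (ancSet_diff_subset_ancSet_margE hUZ)⟩, fun hxU => absurd hxU hx⟩
    | tail _ hs ih => exact ih.step hH hUZ hs
  obtain ⟨b', hr', -⟩ := (hshadow _ (reach_diff_of_reach hUZ hr)).1 hy
  exact ⟨b', hr'⟩

end Contraction

theorem dSep_marginalization_general {V : Type*}
    (E : V → V → Prop) (H : Set (Set V)) (hH : IsSimplicial H)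
    (X Y Z U : Set V) (hU : U ∩ (X ∪ Y ∪ Z) = ∅) :
    DSep E H X Y Z ↔ DSep (MargE E U) (MargH E H U) X Y Z := by
  have hUXYZ : Disjoint U (X ∪ Y ∪ Z) := Set.disjoint_iff_inter_eq_empty.2 hU
  have hUZ : Disjoint U Z := hUXYZ.mono_right Set.subset_union_right
  have hXU : ∀ x ∈ X, x ∉ U := fun x hx => hUXYZ.notMem_of_mem_right (.inl (.inl hx))
  have hYU : ∀ y ∈ Y, y ∉ U := fun y hy => hUXYZ.notMem_of_mem_right (.inl (.inr hy))
  rw [dSep_iff_reach, dSep_iff_reach]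
  constructor
  · intro hsep x hx y hy b hr
    exact hsep x hx y hy b (reach_of_margReach hH hUZ hr)
  · intro hsep x hx y hy b hr
    obtain ⟨b', hr'⟩ := exists_margReach_of_reach hH hUZ (hXU x hx) (hYU y hy) hr
    exact hsep x hx y hy b' hr'

/-- d-separation in a HEDG is stable under marginalization: for
`U ∩ (X ∪ Y ∪ Z) = ∅`, `X ⟂_G^d Y | Z` iff `X ⟂_{G^{marg∖U}}^d Y | Z`. -/
theorem dSep_marginalization {V : Type*} [Fintype V]
    (E : V → V → Prop) (H : Set (Set V)) (hH : IsSimplicial H)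
    (X Y Z U : Set V) (hU : U ∩ (X ∪ Y ∪ Z) = ∅) :
    DSep E H X Y Z ↔ DSep (MargE E U) (MargH E H U) X Y Z :=
  dSep_marginalization_general E H hH X Y Z U hU

end HedgPaper
end

section
/- d-separation in a HEDG G is equivalent to d-separation in its augmented directed graph G^aug: for subsets X,Y,Z ⊆ V, X ⟂_G^d Y | Z if and only if X ⟂_{G^aug}^d Y | Z. -/
namespace HedgPaper

variable {V : Type*}

/-!
A bidirected edge `a ↔ b` of `G` becomes the fork `a ← e_F → b` of `G^aug` for a maximal
hyperedge `F ⊇ {a, b}`, which exists since `V` is finite; `e_F` is a non-collider outside `Z`,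
so openness is preserved. Conversely, `e_F` has no parents, so a walk of `G^aug` between nodes
of `V` visits it only through such forks `a ← e_F → w`. For `a ≠ w` the fork contracts to
`a ↔ w`, an edge of `G` since `H` is closed under subsets; for `a = w` it is deleted.
For the same reason, ancestry among nodes of `V` is unchanged.
-/

/-- The condition for a walk to be open at an interior node `v` that it enters with an
arrowhead at `v` iff `inHead` and leaves with an arrowhead at `v` iff `outHead`. -/
def NodeOpen (E : V → V → Prop) (Z : Set V) (inHead outHead : Prop) (v : V) : Prop :=
  ((inHead ∧ outHead) → v ∈ AncSet E Z) ∧ (¬ (inHead ∧ outHead) → v ∉ Z)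

/-- `OpenFrom E Z D v l`: the walk `l`, leaving `v` which was entered with an arrowhead iff `D`,
is open at `v` and at all its interior nodes; its last node is unconstrained. -/
def OpenFrom (E : V → V → Prop) (Z : Set V) : Prop → V → List (Step V) → Prop
  | _, _, [] => True
  | D, v, t :: l => NodeOpen E Z D t.HeadAtSrc v ∧ OpenFrom E Z t.HeadAtDst t.dst l

def DConnects (E : V → V → Prop) (H : Set (Set V)) (Z : Set V) (D : Prop) (x y : V) : Prop :=
  ∃ l, IsWalk E H l x y ∧ OpenFrom E Z D x l

section Walks

variable {E : V → V → Prop} {H : Set (Set V)} {Z : Set V}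

theorem dInteriorOpen_cons_iff (s : Step V) (l : List (Step V)) :
    DInteriorOpen E Z (s :: l) ↔ OpenFrom E Z s.HeadAtDst s.dst l := by
  induction l generalizing s with
  | nil => exact Iff.rfl
  | cons t l ih => exact and_assoc.symm.trans (and_congr Iff.rfl (ih t))

theorem openFrom_false_iff {v : V} (hv : v ∉ Z) (l : List (Step V)) :
    OpenFrom E Z False v l ↔ DInteriorOpen E Z l := by
  cases l with
  | nil => exact Iff.rfl
  | cons t l =>
    rw [dInteriorOpen_cons_iff]
    exact and_iff_right ⟨fun h => h.1.elim, fun _ => hv⟩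

theorem dSep_iff_forall_not_dConnects {X Y : Set V} :
    DSep E H X Y Z ↔ ∀ x ∈ X, ∀ y ∈ Y, x ∉ Z → y ∉ Z → ¬ DConnects E H Z False x y := by
  refine forall₄_congr fun x _ y _ => ⟨fun h hx hy ⟨l, hw, ho⟩ => ?_, fun h l hw ⟨hx, hy, ho⟩ => ?_⟩
  · exact h l hw ⟨hx, hy, (openFrom_false_iff hx l).1 ho⟩
  · exact h hx hy ⟨l, hw, (openFrom_false_iff hx l).2 ho⟩

/-- A detour `v ← e → v` entered with an arrowhead iff `D` may be cut out of an open walk. -/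
theorem OpenFrom.of_nodeOpen_true {D : Prop} {v : V} {l : List (Step V)}
    (hv : NodeOpen E Z D True v) (hl : OpenFrom E Z True v l) : OpenFrom E Z D v l := by
  cases l with
  | nil => trivial
  | cons t l =>
    obtain ⟨⟨hanc, hnot⟩, hl⟩ := hl
    refine ⟨⟨fun h => hanc ⟨trivial, h.2⟩, fun h => ?_⟩, hl⟩
    by_cases ht : t.HeadAtSrc
    · exact hv.2 fun hD => h ⟨hD.1, ht⟩
    · exact hnot fun h' => ht h'.2

end Walks

theorem exists_maximalHyperedge_superset [Finite V] {H : Set (Set V)} {F : Set V}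
    (hF : F ∈ H) : ∃ M, MaximalHyperedge H M ∧ F ⊆ M := by
  obtain ⟨M, hFM, hM, hmax⟩ := Finite.exists_le_maximal (p := (· ∈ H)) hF
  exact ⟨M, ⟨hM, fun F' hF' hMF' => (hmax hF' hMF').antisymm hMF'⟩, hFM⟩

section Augmented

abbrev AugV (V : Type*) (H : Set (Set V)) : Type _ :=
  V ⊕ {F : Set V // MaximalHyperedge H F}

variable {E : V → V → Prop} {H : Set (Set V)} {Z : Set V}

theorem reach_augE_inl_iff {v z : V} :
    Reach (AugE E H) (Sum.inl v) (Sum.inl z) ↔ Reach E v z := by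
  refine ⟨fun h => ?_, fun h => Relation.ReflTransGen.lift (p := AugE E H) Sum.inl
    (fun _ _ h => h) _ _ h⟩
  suffices ∀ b, Reach (AugE E H) (Sum.inl v) b → ∃ w, b = Sum.inl w ∧ Reach E v w by
    obtain ⟨w, hw, hvw⟩ := this _ h
    exact Sum.inl_injective hw ▸ hvw
  intro b hb
  induction hb with
  | refl => exact ⟨v, rfl, .refl⟩
  | @tail b c _ hbc ih =>
    obtain ⟨u, rfl, hu⟩ := ih
    cases c with
    | inl w => exact ⟨w, rfl, hu.tail hbc⟩
    | inr F => exact (hbc : False).elim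

theorem inl_mem_ancSet_augE_iff {v : V} :
    Sum.inl v ∈ AncSet (AugE E H) (Sum.inl '' Z) ↔ v ∈ AncSet E Z := by
  simp only [AncSet, Set.mem_ofPred_eq, Set.exists_mem_image, reach_augE_inl_iff]

theorem nodeOpen_augE_inl_iff {D D' : Prop} {v : V} :
    NodeOpen (AugE E H) (Sum.inl '' Z) D D' (Sum.inl v) ↔ NodeOpen E Z D D' v := by
  simp only [NodeOpen, inl_mem_ancSet_augE_iff, Sum.inl_injective.mem_set_image]

theorem nodeOpen_augE_inr {D D' : Prop} (hD : ¬ D) (F : {F : Set V // MaximalHyperedge H F}) :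
    NodeOpen (AugE E H) (Sum.inl '' Z) D D' (Sum.inr F) :=
  ⟨fun h => (hD h.1).elim, fun _ ⟨_, _, h⟩ => Sum.inl_ne_inr h⟩

theorem not_augE_inr (a : AugV V H) (F : {F : Set V // MaximalHyperedge H F}) :
    ¬ AugE E H a (Sum.inr F) := by
  cases a <;> exact id

theorem not_valid_bi_trivialH {W : Type*} {R : W → W → Prop} (a b : W) :
    ¬ (⟨a, .bi, b⟩ : Step W).Valid R (TrivialH W) :=
  fun ⟨hne, hsub⟩ => hne (hsub (by simp) (by simp))

theorem DConnects.augE [Finite V] {D : Prop} {x y : V} (h : DConnects E H Z D x y) :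
    DConnects (AugE E H) (TrivialH (AugV V H)) (Sum.inl '' Z) D (Sum.inl x) (Sum.inl y) := by
  obtain ⟨l, hw, ho⟩ := h
  induction l generalizing D x with
  | nil => exact ⟨[], congrArg _ hw, trivial⟩
  | cons s l ih =>
    obtain ⟨a, d, b⟩ := s
    obtain ⟨rfl, hv, hw⟩ := hw
    obtain ⟨hn, ho⟩ := ho
    obtain ⟨l', hw', ho'⟩ := ih hw ho
    have hn' := (nodeOpen_augE_inl_iff (H := H)).2 hn
    cases d with
    | fwd => exact ⟨⟨.inl a, .fwd, .inl b⟩ :: l', ⟨rfl, hv, hw'⟩, hn', ho'⟩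
    | bwd => exact ⟨⟨.inl a, .bwd, .inl b⟩ :: l', ⟨rfl, hv, hw'⟩, hn', ho'⟩
    | bi =>
      obtain ⟨M, hM, hsub⟩ := exists_maximalHyperedge_superset hv.2
      refine ⟨⟨.inl a, .bwd, .inr ⟨M, hM⟩⟩ :: ⟨.inr ⟨M, hM⟩, .fwd, .inl b⟩ :: l',
        ⟨rfl, hsub (by simp), rfl, hsub (by simp), hw'⟩, ?_,
        nodeOpen_augE_inr (by simp [Step.HeadAtDst]) _, ?_⟩
      · simpa [Step.HeadAtSrc] using hn'
      · simpa [Step.HeadAtDst] using ho'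

theorem DConnects.of_walk_augE (hH : ∀ F ∈ H, ∀ F' ⊆ F, F' ∈ H) :
    ∀ (l : List (Step (AugV V H))) {D : Prop} {x y : V},
      IsWalk (AugE E H) (TrivialH (AugV V H)) l (Sum.inl x) (Sum.inl y) →
      OpenFrom (AugE E H) (Sum.inl '' Z) D (Sum.inl x) l → DConnects E H Z D x y
  | [], _, _, _, hw, _ => ⟨[], Sum.inl_injective hw, trivial⟩
  | ⟨_, .bi, _⟩ :: _, _, _, _, ⟨_, hv, _⟩, _ => (not_valid_bi_trivialH _ _ hv).elim
  | ⟨_, .fwd, .inr _⟩ :: _, _, _, _, ⟨_, hv, _⟩, _ => (not_augE_inr _ _ hv).elim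
  | ⟨_, .fwd, .inl b⟩ :: l, _, x, _, ⟨rfl, hv, hw⟩, ⟨hn, ho⟩ =>
    have ⟨l', hw', ho'⟩ := of_walk_augE hH l hw ho
    ⟨⟨x, .fwd, b⟩ :: l', ⟨rfl, hv, hw'⟩, nodeOpen_augE_inl_iff.1 hn, ho'⟩
  | ⟨_, .bwd, .inl b⟩ :: l, _, x, _, ⟨rfl, hv, hw⟩, ⟨hn, ho⟩ =>
    have ⟨l', hw', ho'⟩ := of_walk_augE hH l hw ho
    ⟨⟨x, .bwd, b⟩ :: l', ⟨rfl, hv, hw'⟩, nodeOpen_augE_inl_iff.1 hn, ho'⟩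
  | [⟨_, .bwd, .inr _⟩], _, _, _, ⟨_, _, hw⟩, _ => (Sum.inr_ne_inl hw).elim
  | ⟨_, .bwd, .inr _⟩ :: ⟨_, .bwd, _⟩ :: _, _, _, _, ⟨_, _, rfl, hv, _⟩, _ =>
    (not_augE_inr _ _ hv).elim
  | ⟨_, .bwd, .inr _⟩ :: ⟨_, .bi, _⟩ :: _, _, _, _, ⟨_, _, _, hv, _⟩, _ =>
    (not_valid_bi_trivialH _ _ hv).elim
  | ⟨_, .bwd, .inr _⟩ :: ⟨_, .fwd, .inr _⟩ :: _, _, _, _, ⟨_, _, rfl, hv, _⟩, _ =>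
    (hv : False).elim
  | ⟨_, .bwd, .inr F⟩ :: ⟨_, .fwd, .inl w⟩ :: l, D, x, _, ⟨rfl, hx, rfl, hw, hl⟩,
      ⟨hn, _, ho⟩ => by
    have hn : NodeOpen E Z D True x := by
      simpa [Step.HeadAtSrc] using nodeOpen_augE_inl_iff.1 hn
    obtain ⟨l', hw', ho'⟩ := of_walk_augE hH l hl ho
    replace ho' : OpenFrom E Z True w l' := by simpa [Step.HeadAtDst] using ho'
    by_cases hxw : x = w
    · subst hxw
      exact ⟨l', hw', ho'.of_nodeOpen_true hn⟩
    · have hpair : ({x, w} : Set V) ∈ H := hH F.1 F.2.1 _ (Set.pair_subset hx hw)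
      exact ⟨⟨x, .bi, w⟩ :: l', ⟨rfl, ⟨hxw, hpair⟩, hw'⟩, by simpa [Step.HeadAtSrc] using hn,
        by simpa [Step.HeadAtDst] using ho'⟩

theorem dConnects_augE_iff [Finite V] (hH : ∀ F ∈ H, ∀ F' ⊆ F, F' ∈ H) {D : Prop} {x y : V} :
    DConnects (AugE E H) (TrivialH (AugV V H)) (Sum.inl '' Z) D (Sum.inl x) (Sum.inl y) ↔
      DConnects E H Z D x y :=
  ⟨fun ⟨l, hw, ho⟩ => DConnects.of_walk_augE hH l hw ho, DConnects.augE⟩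

end Augmented

/-- d-separation in a HEDG `G` is equivalent to (ordinary Pearl)
d-separation in its augmented directed graph `G^aug`. -/
theorem dSep_iff_dSep_augmented {V : Type*} [Fintype V]
    (E : V → V → Prop) (H : Set (Set V)) (hH : IsSimplicial H) (X Y Z : Set V) :
    DSep E H X Y Z ↔
      DSep (AugE E H) (TrivialH (V ⊕ {F : Set V // MaximalHyperedge H F}))
        (Sum.inl '' X) (Sum.inl '' Y) (Sum.inl '' Z) := by
  simp only [dSep_iff_forall_not_dConnects, Set.forall_mem_image,
    Sum.inl_injective.mem_set_image, dConnects_augE_iff hH.2]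

end HedgPaper
end

section
/- For a directed graph G=(V,E) and subsets X,Y,Z ⊆ V such that G = Anc^G(X∪Y∪Z), d-separation of X from Y given Z in G is equivalent to separation of X from Y given Z in the moralization G^moral. (This holds even when G contains directed cycles.) -/
namespace HedgPaper

variable {V : Type*}

/-!
A `Z`-open walk turns into a moral path outside `Z`: its non-colliders avoid `Z`, and each
collider `x → c ← w` is bypassed by the moral edge `x — w`. Conversely, walk back along a
moral path from its end in `Y`, keeping a `Z`-open walk to `Y \ Z`. Each moral edge lifts to
one or two directed edges, and the only obstruction is a new collider `c` that is not an
ancestor of `Z`. As the graph is ancestral for `X ∪ Y ∪ Z`, such a `c` has a directed path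
outside `Anc(Z)` to some `τ ∈ X ∪ Y`; for `τ ∈ Y` it replaces the old walk, and for `τ ∈ X`
its reversal followed by the old walk is a `Z`-open walk from `X` to `Y`, which d-separation
excludes.
-/

section

variable {E : V → V → Prop} {X Y Z : Set V}

lemma subset_ancSet : Z ⊆ AncSet E Z := fun z hz => ⟨z, hz, .refl⟩

lemma mem_ancSet_of_reach {v w : V} (hvw : Reach E v w) (hw : w ∈ AncSet E Z) :
    v ∈ AncSet E Z :=
  let ⟨z, hz, hwz⟩ := hw
  ⟨z, hz, hvw.trans hwz⟩

lemma reflTransGen_notMem_of_reach {v t : V} (hv : v ∉ AncSet E Z) (hvt : Reach E v t) :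
    Relation.ReflTransGen (fun a b => E a b ∧ b ∉ Z) v t := by
  induction hvt with
  | refl => exact .refl
  | @tail b c hvb hbc ih =>
    have hc : c ∉ AncSet E Z := fun hc => hv (mem_ancSet_of_reach (hvb.tail hbc) hc)
    exact ih.tail ⟨hbc, fun hcZ => hc (subset_ancSet hcZ)⟩

lemma Step.valid_trivialH {s : Step V} (hs : s.Valid E (TrivialH V)) :
    (s.dir = .fwd ∧ E s.src s.dst) ∨ (s.dir = .bwd ∧ E s.dst s.src) := by
  rcases s with ⟨a, d, b⟩
  cases d with
  | fwd => exact .inl ⟨rfl, hs⟩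
  | bwd => exact .inr ⟨rfl, hs⟩
  | bi => exact absurd (hs.2 (Set.mem_insert _ _) (Set.mem_insert_of_mem _ rfl)) hs.1

lemma Step.edge_of_headAtDst {s : Step V} (hs : s.Valid E (TrivialH V)) (h : s.HeadAtDst) :
    E s.src s.dst := by
  rcases Step.valid_trivialH hs with ⟨_, he⟩ | ⟨hd, _⟩
  · exact he
  · simp [Step.HeadAtDst, hd] at h

lemma Step.edge_of_headAtSrc {s : Step V} (hs : s.Valid E (TrivialH V)) (h : s.HeadAtSrc) :
    E s.dst s.src := by
  rcases Step.valid_trivialH hs with ⟨hd, _⟩ | ⟨_, he⟩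
  · simp [Step.HeadAtSrc, hd] at h
  · exact he

lemma Step.not_headAtDst_of_headAtSrc {s : Step V} (hs : s.Valid E (TrivialH V))
    (h : s.HeadAtSrc) : ¬ s.HeadAtDst := by
  rcases Step.valid_trivialH hs with ⟨hd, _⟩ | ⟨hd, _⟩ <;>
    simp_all [Step.HeadAtSrc, Step.HeadAtDst]

lemma Step.moralDirE {s : Step V} (hs : s.Valid E (TrivialH V)) (hne : s.src ≠ s.dst) :
    MoralDirE E s.src s.dst := by
  rcases Step.valid_trivialH hs with ⟨_, he⟩ | ⟨_, he⟩
  · exact ⟨hne, .inl he⟩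
  · exact ⟨hne, .inr (.inl he)⟩

lemma DInteriorOpen.tail {s : Step V} {l : List (Step V)} (h : DInteriorOpen E Z (s :: l)) :
    DInteriorOpen E Z l := by
  cases l with
  | nil => trivial
  | cons t l => exact h.2.2

lemma DInteriorOpen.cons {s : Step V} {l : List (Step V)} (hl : DInteriorOpen E Z l)
    (hZ : s.dst ∉ Z) (hcol : ∀ t ∈ l.head?, s.HeadAtDst → t.HeadAtSrc → s.dst ∈ AncSet E Z) :
    DInteriorOpen E Z (s :: l) := by
  cases l with
  | nil => trivial
  | cons t l => exact ⟨fun h => hcol t rfl h.1 h.2, fun _ => hZ, hl⟩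

lemma reflTransGen_moral_of_ne_imp {a b : V} (hab : a ≠ b → MoralDirE E a b) (hb : b ∉ Z) :
    Relation.ReflTransGen (fun u v => MoralDirE E u v ∧ v ∉ Z) a b := by
  by_cases h : a = b
  · exact h ▸ .refl
  · exact .single ⟨hab h, hb⟩

theorem reflTransGen_moral_of_dInteriorOpen :
    ∀ (l : List (Step V)) (x y : V), IsWalk E (TrivialH V) l x y → DInteriorOpen E Z l →
      y ∉ Z → Relation.ReflTransGen (fun a b => MoralDirE E a b ∧ b ∉ Z) x y
  | [], _, _, hw, _, _ => hw ▸ .refl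
  | [s], _, _, ⟨rfl, hs, rfl⟩, _, hy => reflTransGen_moral_of_ne_imp (s.moralDirE hs) hy
  | s :: t :: l, _, y, ⟨rfl, hs, hts, ht, hw⟩, ⟨_, hnon, ho⟩, hy => by
    by_cases hc : s.HeadAtDst ∧ t.HeadAtSrc
    · have htZ : t.dst ∉ Z := by
        cases l with
        | nil => exact hw ▸ hy
        | cons u l => exact ho.2.1 fun h => t.not_headAtDst_of_headAtSrc ht hc.2 h.1
      have hparents : s.src ≠ t.dst → MoralDirE E s.src t.dst := fun hne =>
        ⟨hne, .inr (.inr ⟨s.dst, s.edge_of_headAtDst hs hc.1,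
          hts ▸ t.edge_of_headAtSrc ht hc.2⟩)⟩
      exact (reflTransGen_moral_of_ne_imp hparents htZ).trans
        (reflTransGen_moral_of_dInteriorOpen l t.dst y hw ho.tail hy)
    · exact (reflTransGen_moral_of_ne_imp (s.moralDirE hs) (hnon hc)).trans
        (reflTransGen_moral_of_dInteriorOpen (t :: l) s.dst y ⟨hts, ht, hw⟩ ho hy)

lemma exists_dOpen_walk_of_reflTransGen {v τ : V}
    (h : Relation.ReflTransGen (fun a b => E a b ∧ b ∉ Z) v τ) :
    ∃ l, IsWalk E (TrivialH V) l v τ ∧ DInteriorOpen E Z l := by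
  suffices ∃ l, IsWalk E (TrivialH V) l v τ ∧ DInteriorOpen E Z l ∧
      ∀ s ∈ l.head?, ¬ s.HeadAtSrc from
    let ⟨l, hw, ho, _⟩ := this
    ⟨l, hw, ho⟩
  induction h using Relation.ReflTransGen.head_induction_on with
  | refl => exact ⟨[], rfl, trivial, by simp⟩
  | @head a c hac _ ih =>
    obtain ⟨l, hw, ho, hhead⟩ := ih
    refine ⟨⟨a, .fwd, c⟩ :: l, ⟨rfl, hac.1, hw⟩,
      ho.cons hac.2 fun t ht _ htS => absurd htS (hhead t ht), ?_⟩
    simp [Step.HeadAtSrc]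

lemma exists_dOpen_walk_of_reverse_reflTransGen {w τ y : V}
    (h : Relation.ReflTransGen (fun a b => E a b ∧ b ∉ Z) w τ) (hwZ : w ∉ Z)
    {l : List (Step V)} (hw : IsWalk E (TrivialH V) l w y) (ho : DInteriorOpen E Z l) :
    ∃ l', IsWalk E (TrivialH V) l' τ y ∧ DInteriorOpen E Z l' := by
  induction h using Relation.ReflTransGen.head_induction_on generalizing l with
  | refl => exact ⟨l, hw, ho⟩
  | @head a c hac _ ih =>
    exact ih hac.2 (l := ⟨c, .bwd, a⟩ :: l) ⟨rfl, hac.1, hw⟩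
      (ho.cons hwZ fun _ _ h => by simp [Step.HeadAtDst] at h)

def HasDOpenWalkTo (E : V → V → Prop) (Z : Set V) (v : V) (Y : Set V) : Prop :=
  ∃ y ∈ Y, y ∉ Z ∧ ∃ l, IsWalk E (TrivialH V) l v y ∧ DInteriorOpen E Z l

lemma HasDOpenWalkTo.of_edge_to {a b : V} (hb : HasDOpenWalkTo E Z b Y) (hbZ : b ∉ Z)
    (hba : E b a) : HasDOpenWalkTo E Z a Y :=
  let ⟨y, hy, hyZ, l, hw, ho⟩ := hb
  ⟨y, hy, hyZ, ⟨a, .bwd, b⟩ :: l, ⟨rfl, hba, hw⟩,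
    ho.cons hbZ fun _ _ h => by simp [Step.HeadAtDst] at h⟩

lemma HasDOpenWalkTo.of_edge_from (hD : DSep E (TrivialH V) X Y Z)
    {a b : V} (hb : HasDOpenWalkTo E Z b Y) (hbZ : b ∉ Z) (hbanc : b ∈ AncSet E (X ∪ Y ∪ Z))
    (hab : E a b) : HasDOpenWalkTo E Z a Y := by
  obtain ⟨y, hy, hyZ, l, hw, ho⟩ := hb
  by_cases hbA : b ∈ AncSet E Z
  · exact ⟨y, hy, hyZ, ⟨a, .fwd, b⟩ :: l, ⟨rfl, hab, hw⟩, ho.cons hbZ fun _ _ _ _ => hbA⟩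
  obtain ⟨τ, hτ, hbτ⟩ := hbanc
  have hpath := reflTransGen_notMem_of_reach hbA hbτ
  have hτZ : τ ∉ Z := fun h => hbA (mem_ancSet_of_reach hbτ (subset_ancSet h))
  rcases hτ with (hτX | hτY) | hτZ'
  · obtain ⟨l', hw', ho'⟩ := exists_dOpen_walk_of_reverse_reflTransGen hpath hbZ hw ho
    exact absurd ⟨hτZ, hyZ, ho'⟩ (hD τ hτX y hy l' hw')
  · exact ⟨τ, hτY, hτZ, exists_dOpen_walk_of_reflTransGen (.head ⟨hab, hbZ⟩ hpath)⟩
  · exact absurd hτZ' hτZ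

lemma HasDOpenWalkTo.of_common_child (hD : DSep E (TrivialH V) X Y Z)
    {a b c : V} (hb : HasDOpenWalkTo E Z b Y) (hbZ : b ∉ Z)
    (hcanc : c ∈ AncSet E (X ∪ Y ∪ Z)) (hac : E a c) (hbc : E b c) :
    HasDOpenWalkTo E Z a Y := by
  by_cases hcA : c ∈ AncSet E Z
  · obtain ⟨y, hy, hyZ, l, hw, ho⟩ := hb
    have ho' : DInteriorOpen E Z (⟨c, .bwd, b⟩ :: l) :=
      ho.cons hbZ fun _ _ h => by simp [Step.HeadAtDst] at h
    exact ⟨y, hy, hyZ, ⟨a, .fwd, c⟩ :: ⟨c, .bwd, b⟩ :: l, ⟨rfl, hac, rfl, hbc, hw⟩,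
      fun _ => hcA, fun h => absurd ⟨.inl rfl, .inl rfl⟩ h, ho'⟩
  · exact (hb.of_edge_to hbZ hbc).of_edge_from hD (fun h => hcA (subset_ancSet h)) hcanc hac

lemma hasDOpenWalkTo_of_moral_path (hD : DSep E (TrivialH V) X Y Z)
    (hanc : ∀ v, v ∈ AncSet E (X ∪ Y ∪ Z)) {v y : V} (hy : y ∈ Y)
    (h : Relation.ReflTransGen (fun a b => MoralDirE E a b ∧ b ∉ Z) v y) (hv : v ∉ Z) :
    HasDOpenWalkTo E Z v Y := by
  induction h using Relation.ReflTransGen.head_induction_on with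
  | refl => exact ⟨_, hy, hv, [], rfl, trivial⟩
  | @head a b hab _ ih =>
    obtain ⟨⟨_, hedge⟩, hbZ⟩ := hab
    rcases hedge with hab | hba | ⟨c, hac, hbc⟩
    · exact (ih hbZ).of_edge_from hD hbZ (hanc b) hab
    · exact (ih hbZ).of_edge_to hbZ hba
    · exact (ih hbZ).of_common_child hD hbZ (hanc c) hac hbc

end

theorem dSep_iff_moral_sep_of_ancestral_general {V : Type*}
    (E : V → V → Prop) (X Y Z : Set V)
    (hanc : ∀ v : V, ∃ t ∈ X ∪ Y ∪ Z, Reach E v t) :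
    DSep E (TrivialH V) X Y Z ↔ USep (MoralDirE E) X Y Z := by
  constructor
  · rintro hD x hx y hy ⟨hxZ, hpath⟩
    obtain ⟨y', hy', hy'Z, l, hw, ho⟩ := hasDOpenWalkTo_of_moral_path hD hanc hy hpath hxZ
    exact hD x hx y' hy' l hw ⟨hxZ, hy'Z, ho⟩
  · rintro hU x hx y hy l hw ⟨hxZ, hyZ, ho⟩
    exact hU x hx y hy ⟨hxZ, reflTransGen_moral_of_dInteriorOpen l x y hw ho hyZ⟩

/-- For a directed graph `G = (V,E)` (possibly with cycles) such that
`G = Anc^G(X ∪ Y ∪ Z)`, d-separation of `X` from `Y` given `Z` is equivalent to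
separation of `X` from `Y` given `Z` in the moralization `G^moral`. -/
theorem dSep_iff_moral_sep_of_ancestral {V : Type*} [Fintype V]
    (E : V → V → Prop) (X Y Z : Set V)
    (hanc : ∀ v : V, ∃ t ∈ X ∪ Y ∪ Z, Reach E v t) :
    DSep E (TrivialH V) X Y Z ↔ USep (MoralDirE E) X Y Z :=
  dSep_iff_moral_sep_of_ancestral_general E X Y Z hanc

end HedgPaper
end

section
/- For any HEDG G=(V,E,H) and subsets X,Y,Z ⊆ V: X ⟂_G^d Y | Z if and only if X is separated from Y given Z in the moralization of the ancestral closure Anc^G(X∪Y∪Z). -/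
namespace HedgPaper

variable {V : Type*}

/-!
A `Z`-avoiding path in the moral graph of `Anc(X ∪ Y ∪ Z)` unfolds edge by edge into a walk whose
non-colliders avoid `Z` and whose colliders lie in `Anc(X ∪ Y ∪ Z)`. A collider `c` outside
`Anc Z` reaches `X ∪ Y` along a directed path that avoids `Z`, so the walk can be rerouted at `c`:
backwards along that path to a new start in `X`, or forwards along it to a new end in `Y`.
Conversely, every node of a d-open walk lies in `Anc(X ∪ Y ∪ Z)` (follow the directed edges
leaving a non-collider until a collider or an endpoint is hit), and consecutive non-colliders,
joined by a run of colliders, are adjacent in the moralization.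
-/

section Walks

variable {E : V → V → Prop} {H : Set (Set V)}

lemma IsWalk.append {l₁ l₂ : List (Step V)} {x m y : V}
    (h₁ : IsWalk E H l₁ x m) (h₂ : IsWalk E H l₂ m y) : IsWalk E H (l₁ ++ l₂) x y := by
  induction l₁ generalizing x with
  | nil => exact (h₁ : x = m) ▸ h₂
  | cons s l ih => exact ⟨h₁.1, h₁.2.1, ih h₁.2.2⟩

lemma IsWalk.dst_of_mem_getLast? {l : List (Step V)} {x y : V} (h : IsWalk E H l x y) :
    ∀ s ∈ l.getLast?, s.dst = y := by
  induction l generalizing x with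
  | nil => simp
  | cons s l ih =>
    cases l with
    | nil => rintro _ ⟨⟩; exact h.2.2
    | cons t r => rw [List.getLast?_cons_cons]; exact ih h.2.2

lemma exists_fwd_walk {u w : V} (h : Reach E u w) :
    ∃ l, IsWalk E H l u w ∧ ∀ s ∈ l, s.dir = .fwd ∧ Reach E u s.dst := by
  induction h using Relation.ReflTransGen.head_induction_on with
  | refl => exact ⟨[], rfl, by simp⟩
  | head huv _ ih =>
    obtain ⟨l, hl, hsteps⟩ := ih
    refine ⟨⟨_, .fwd, _⟩ :: l, ⟨rfl, huv, hl⟩, ?_⟩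
    rintro s (_ | ⟨_, hs⟩)
    · exact ⟨rfl, .single huv⟩
    · exact ⟨(hsteps s hs).1, .head huv (hsteps s hs).2⟩

lemma exists_bwd_walk {u w : V} (h : Reach E u w) :
    ∃ l, IsWalk E H l w u ∧ ∀ s ∈ l, s.dir = .bwd ∧ Reach E u s.dst := by
  induction h with
  | refl => exact ⟨[], rfl, by simp⟩
  | tail hub hbc ih =>
    obtain ⟨l, hl, hsteps⟩ := ih
    refine ⟨⟨_, .bwd, _⟩ :: l, ⟨rfl, hbc, hl⟩, ?_⟩
    rintro s (_ | ⟨_, hs⟩)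
    · exact ⟨rfl, hub⟩
    · exact hsteps s hs

end Walks

section Ancestors

variable {E : V → V → Prop} {S T : Set V} {u v : V}

lemma mem_ancSet_of_mem (h : v ∈ S) : v ∈ AncSet E S := ⟨v, h, .refl⟩

lemma mem_ancSet_of_edge (h : E u v) (hv : v ∈ AncSet E S) : u ∈ AncSet E S :=
  let ⟨z, hz, hvz⟩ := hv
  ⟨z, hz, .head h hvz⟩

lemma ancSet_mono (h : S ⊆ T) : AncSet E S ⊆ AncSet E T :=
  fun _ ⟨z, hz, hvz⟩ => ⟨z, h hz, hvz⟩

lemma not_mem_ancSet_of_reach (h : Reach E u v) (hu : u ∉ AncSet E S) : v ∉ AncSet E S :=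
  fun ⟨z, hz, hvz⟩ => hu ⟨z, hz, h.trans hvz⟩

lemma exists_reach_of_mem_ancSet_union (h : v ∈ AncSet E (S ∪ T)) (hT : v ∉ AncSet E T) :
    ∃ w ∈ S, Reach E v w := by
  obtain ⟨w, hw | hw, hvw⟩ := h
  · exact ⟨w, hw, hvw⟩
  · exact absurd ⟨w, hw, hvw⟩ hT

end Ancestors

def Collider (s t : Step V) : Prop := s.HeadAtDst ∧ t.HeadAtSrc

def DOpenAt (E : V → V → Prop) (Z : Set V) (s t : Step V) : Prop :=
  (Collider s t → s.dst ∈ AncSet E Z) ∧ (¬ Collider s t → s.dst ∉ Z)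

def WeakOpenAt (Z A : Set V) (s t : Step V) : Prop :=
  (Collider s t → s.dst ∈ A) ∧ (¬ Collider s t → s.dst ∉ Z)

def ColliderIn (A : Set V) (s t : Step V) : Prop := Collider s t ∧ s.dst ∈ A

section OpenWalks

variable {E : V → V → Prop} {H : Set (Set V)} {X Y Z : Set V}

lemma dInteriorOpen_iff_isChain {l : List (Step V)} :
    DInteriorOpen E Z l ↔ l.IsChain (DOpenAt E Z) := by
  induction l with
  | nil => simp [DInteriorOpen]
  | cons s l ih =>
    cases l with
    | nil => simp [DInteriorOpen]
    | cons t r => rw [List.isChain_cons_cons, ← ih]; exact and_assoc.symm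

lemma isChain_dOpenAt_of_forall {l : List (Step V)} (hZ : ∀ s ∈ l, s.dst ∉ Z)
    (hc : ∀ s ∈ l, ∀ t ∈ l, ¬ Collider s t) : l.IsChain (DOpenAt E Z) :=
  (List.pairwise_of_forall_mem_list fun s hs t ht =>
    ⟨fun h => absurd h (hc s hs t ht), fun _ => hZ s hs⟩).isChain

lemma not_dSep_of_isWalk {x y : V} {l : List (Step V)} (hx : x ∈ X) (hy : y ∈ Y)
    (hxZ : x ∉ Z) (hyZ : y ∉ Z) (hl : IsWalk E H l x y) (hopen : l.IsChain (DOpenAt E Z)) :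
    ¬ DSep E H X Y Z :=
  fun hD => hD x hx y hy l hl ⟨hxZ, hyZ, dInteriorOpen_iff_isChain.2 hopen⟩

end OpenWalks

section MoralToWalk

variable {E : V → V → Prop} {H : Set (Set V)} {A Z : Set V}

lemma exists_bi_walk {a b : V} (h : Relation.ReflTransGen (BiRel (InducedH H A)) a b) :
    ∃ m, IsWalk E H m a b ∧ ∀ s ∈ m, s.dir = .bi ∧ s.dst ∈ A := by
  induction h using Relation.ReflTransGen.head_induction_on with
  | refl => exact ⟨[], rfl, by simp⟩
  | head hac _ ih =>
    obtain ⟨m, hm, hsteps⟩ := ih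
    obtain ⟨hne, hH, hA⟩ := hac
    refine ⟨⟨_, .bi, _⟩ :: m, ⟨rfl, ⟨hne, hH⟩, hm⟩, ?_⟩
    rintro s (_ | ⟨_, hs⟩)
    · exact ⟨rfl, hA (by simp)⟩
    · exact hsteps s hs

lemma exists_colliderWalk_of_biChain {v a b : V} (hva : v = a ∨ InducedE E A v a)
    (hab : Relation.ReflTransGen (BiRel (InducedH H A)) a b) :
    ∃ l, IsWalk E H l v b ∧ l.IsChain (ColliderIn A) ∧ ∀ s ∈ l, s.HeadAtDst ∧ s.dst ∈ A := by
  obtain ⟨m, hm, hsteps⟩ := exists_bi_walk (E := E) hab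
  have hchain : m.IsChain (ColliderIn A) :=
    (List.pairwise_of_forall_mem_list fun s hs t ht =>
      ⟨⟨.inr (hsteps s hs).1, .inr (hsteps t ht).1⟩, (hsteps s hs).2⟩).isChain
  rcases hva with rfl | ⟨-, haA, hva⟩
  · exact ⟨m, hm, hchain, fun s hs => ⟨.inr (hsteps s hs).1, (hsteps s hs).2⟩⟩
  refine ⟨⟨v, .fwd, a⟩ :: m, ⟨rfl, hva, hm⟩, List.isChain_cons.2 ⟨?_, hchain⟩, ?_⟩
  · exact fun t ht => ⟨⟨.inl rfl, .inr (hsteps t (List.mem_of_mem_head? ht)).1⟩, haA⟩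
  · rintro s (_ | ⟨_, hs⟩)
    · exact ⟨.inl rfl, haA⟩
    · exact ⟨.inr (hsteps s hs).1, (hsteps s hs).2⟩

lemma MoralE.exists_colliderWalk {v w : V} (h : MoralE (InducedE E A) (InducedH H A) v w) :
    ∃ l, IsWalk E H l v w ∧ l.IsChain (ColliderIn A) := by
  obtain ⟨-, a, b, hva, hwb, hab⟩ := h
  obtain ⟨l, hl, hchain, hsteps⟩ := exists_colliderWalk_of_biChain (E := E) hva hab
  rcases hwb with rfl | ⟨-, hbA, hwb⟩
  · exact ⟨l, hl, hchain⟩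
  have hbw : IsWalk E H [⟨b, .bwd, w⟩] b w := ⟨rfl, hwb, rfl⟩
  refine ⟨l ++ [⟨b, .bwd, w⟩], hl.append hbw, hchain.append (List.isChain_singleton _) ?_⟩
  rintro s hs _ ⟨⟩
  have hs := hsteps s (List.mem_of_getLast? hs)
  exact ⟨⟨hs.1, .inl rfl⟩, hs.2⟩

lemma MoralE.right_mem {v w : V} (h : MoralE (InducedE E A) (InducedH H A) v w) : w ∈ A := by
  obtain ⟨hvw, a, b, hva, hwb, hab⟩ := h
  rcases hwb with rfl | hwb
  · rcases hab.cases_tail with rfl | ⟨c, -, hcw⟩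
    · rcases hva with rfl | hva
      · exact absurd rfl hvw
      · exact hva.2.1
    · exact hcw.2.2 (by simp)
  · exact hwb.1

lemma exists_weakOpenWalk_of_reflTransGen {x y : V} (hxZ : x ∉ Z)
    (h : Relation.ReflTransGen
      (fun p q => MoralE (InducedE E A) (InducedH H A) p q ∧ q ∉ Z) x y) :
    y ∉ Z ∧ ∃ l, IsWalk E H l x y ∧ l.IsChain (WeakOpenAt Z A) := by
  induction h using Relation.ReflTransGen.head_induction_on with
  | refl => exact ⟨hxZ, [], rfl, List.isChain_nil⟩
  | head hxb _ ih =>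
    obtain ⟨hM, hbZ⟩ := hxb
    obtain ⟨hyZ, l, hl, hchain⟩ := ih hbZ
    obtain ⟨seg, hseg, hsegc⟩ := hM.exists_colliderWalk
    refine ⟨hyZ, seg ++ l, hseg.append hl, ?_⟩
    refine (hsegc.imp fun s t h => ⟨fun _ => h.2, fun hc => absurd h.1 hc⟩).append hchain ?_
    intro s hs _ _
    have hsb := hseg.dst_of_mem_getLast? s hs
    exact ⟨fun _ => hsb ▸ hM.right_mem, fun _ => hsb ▸ hbZ⟩

end MoralToWalk

section Repair

variable {E : V → V → Prop} {H : Set (Set V)} {X Y Z : Set V}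

/-- The open walk returned keeps the first step of `l`, so that prepending a step preserves
openness at the junction. -/
lemma not_dSep_or_exists_openWalk {y u : V} (hy : y ∈ Y) (hyZ : y ∉ Z) {l : List (Step V)}
    (hl : IsWalk E H l u y) (hweak : l.IsChain (WeakOpenAt Z (AncSet E (X ∪ Y ∪ Z)))) :
    ¬ DSep E H X Y Z ∨ ∃ y' ∈ Y, y' ∉ Z ∧
      ∃ l', IsWalk E H l' u y' ∧ l'.IsChain (DOpenAt E Z) ∧ l'.head? = l.head? := by
  induction l generalizing u with
  | nil => exact .inr ⟨y, hy, hyZ, [], hl, List.isChain_nil, rfl⟩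
  | cons s l ih =>
    obtain ⟨rfl, hs, hl⟩ := hl
    obtain ⟨hweak_s, hweak⟩ := List.isChain_cons.1 hweak
    obtain hD | ⟨y', hy', hy'Z, l', hl', hopen, hhead⟩ := ih hl hweak
    · exact .inl hD
    by_cases hbad : ∃ t ∈ l.head?, Collider s t ∧ s.dst ∉ AncSet E Z
    · obtain ⟨t, ht, hcol, hnot⟩ := hbad
      have hfree : ∀ v, Reach E s.dst v → v ∉ Z := fun v hv hvZ =>
        not_mem_ancSet_of_reach hv hnot (mem_ancSet_of_mem hvZ)
      obtain ⟨τ, hτ | hτ, hreach⟩ :=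
        exists_reach_of_mem_ancSet_union ((hweak_s t ht).1 hcol) hnot
      · obtain ⟨lb, hlb, hsteps⟩ := exists_bwd_walk (H := H) hreach
        have hnc : ∀ a ∈ lb, ∀ b, ¬ Collider a b := fun a ha _ hc => by
          simpa [Step.HeadAtDst, (hsteps a ha).1] using hc.1
        refine .inl (not_dSep_of_isWalk hτ hy' (hfree τ hreach) hy'Z (hlb.append hl') ?_)
        refine (isChain_dOpenAt_of_forall (fun a ha => hfree _ (hsteps a ha).2)
          fun a ha b _ => hnc a ha b).append hopen fun a ha b _ => ?_
        have ha := List.mem_of_getLast? ha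
        exact ⟨fun hc => absurd hc (hnc a ha b), fun _ => hfree _ (hsteps a ha).2⟩
      · obtain ⟨lf, hlf, hsteps⟩ := exists_fwd_walk (H := H) hreach
        have hnc : ∀ a, ∀ b ∈ lf, ¬ Collider a b := fun _ b hb hc => by
          simpa [Step.HeadAtSrc, (hsteps b hb).1] using hc.2
        refine .inr ⟨τ, hτ, hfree τ hreach, s :: lf, ⟨rfl, hs, hlf⟩, ?_, rfl⟩
        refine List.isChain_cons.2 ⟨fun b hb => ?_, isChain_dOpenAt_of_forall
          (fun a ha => hfree _ (hsteps a ha).2) fun a _ b hb => hnc a b hb⟩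
        exact ⟨fun hc => absurd hc (hnc s b (List.mem_of_mem_head? hb)),
          fun _ => hfree _ .refl⟩
    · push Not at hbad
      refine .inr ⟨y', hy', hy'Z, s :: l', ⟨rfl, hs, hl'⟩, List.isChain_cons.2 ⟨?_, hopen⟩, rfl⟩
      rw [hhead]
      exact fun t ht => ⟨hbad t ht, (hweak_s t ht).2⟩

end Repair

section WalkToMoral

variable {E : V → V → Prop} {H : Set (Set V)} {S Z : Set V} {y : V}

lemma mem_ancSet_of_openWalk_of_not_headAtSrc (hZS : Z ⊆ S) (hy : y ∈ AncSet E S) :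
    ∀ {l : List (Step V)} {u : V}, IsWalk E H l u y → l.IsChain (DOpenAt E Z) →
      (∀ s ∈ l.head?, ¬ s.HeadAtSrc) → u ∈ AncSet E S := by
  intro l
  induction l with
  | nil => intro u hl _ _; exact (hl : u = y) ▸ hy
  | cons s l ih =>
    rintro _ ⟨rfl, hs, hl⟩ hopen hfwd
    rcases s with ⟨u, _ | _ | _, w⟩
    · refine mem_ancSet_of_edge hs ?_
      cases l with
      | nil => exact (hl : w = y) ▸ hy
      | cons t r =>
        by_cases hcol : Collider ⟨u, .fwd, w⟩ t
        · exact ancSet_mono hZS ((List.isChain_cons_cons.1 hopen).1.1 hcol)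
        · exact ih hl hopen.tail fun _ ht hsrc =>
            hcol ⟨.inl rfl, Option.mem_some_iff.1 ht ▸ hsrc⟩
    · exact absurd (.inl rfl) (hfwd _ rfl)
    · exact absurd (.inr rfl) (hfwd _ rfl)

lemma dst_mem_ancSet_of_openWalk (hZS : Z ⊆ S) (hy : y ∈ AncSet E S) {s : Step V}
    {l : List (Step V)} {u : V} (hl : IsWalk E H (s :: l) u y)
    (hopen : (s :: l).IsChain (DOpenAt E Z)) (hu : u ∈ AncSet E S) : s.dst ∈ AncSet E S := by
  obtain ⟨rfl, hs, hl⟩ := hl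
  cases l with
  | nil => exact (hl : s.dst = y) ▸ hy
  | cons t r =>
    by_cases hcol : Collider s t
    · exact ancSet_mono hZS ((List.isChain_cons_cons.1 hopen).1.1 hcol)
    rcases s with ⟨u, _ | _ | _, w⟩
    · exact mem_ancSet_of_openWalk_of_not_headAtSrc hZS hy hl hopen.tail
        fun _ ht hsrc => hcol ⟨.inl rfl, Option.mem_some_iff.1 ht ▸ hsrc⟩
    · exact mem_ancSet_of_edge hs hu
    · exact mem_ancSet_of_openWalk_of_not_headAtSrc hZS hy hl hopen.tail
        fun _ ht hsrc => hcol ⟨.inr rfl, Option.mem_some_iff.1 ht ▸ hsrc⟩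

lemma MoralE.reflTransGen_head {E' : V → V → Prop} {H' : Set (Set V)} {v w a b : V}
    (hva : v = a ∨ E' v a) (hwb : w = b ∨ E' w b)
    (hab : Relation.ReflTransGen (BiRel H') a b) (hwZ : w ∉ Z)
    (h : Relation.ReflTransGen (fun p q => MoralE E' H' p q ∧ q ∉ Z) w y) :
    Relation.ReflTransGen (fun p q => MoralE E' H' p q ∧ q ∉ Z) v y := by
  by_cases hvw : v = w
  · exact hvw ▸ h
  · exact .head ⟨⟨hvw, a, b, hva, hwb, hab⟩, hwZ⟩ h

/-- Walking along a d-open walk, `v` is the last non-collider passed, `a` is `v` or the child of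
`v` entered next, and `a ↔ ⋯ ↔ u` are the colliders passed since. -/
lemma reflTransGen_moral_of_openWalk (hZS : Z ⊆ S) (hyS : y ∈ S) (hyZ : y ∉ Z) :
    ∀ {l : List (Step V)} {u : V}, IsWalk E H l u y → l.IsChain (DOpenAt E Z) →
      u ∈ AncSet E S → (∀ s ∈ l.head?, ¬ s.HeadAtSrc → u ∉ Z) →
      ∀ {v a : V}, (v = a ∨ InducedE E (AncSet E S) v a) →
      Relation.ReflTransGen (BiRel (InducedH H (AncSet E S))) a u →
      Relation.ReflTransGen (fun p q => MoralE (InducedE E (AncSet E S))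
        (InducedH H (AncSet E S)) p q ∧ q ∉ Z) v y := by
  intro l
  induction l with
  | nil =>
    intro u hl _ _ _ _ _ hva hau
    exact MoralE.reflTransGen_head hva (.inl (hl : u = y).symm) hau hyZ .refl
  | cons s l ih =>
    intro u hl hopen hu huZ v a hva hau
    have hwA := dst_mem_ancSet_of_openWalk hZS (mem_ancSet_of_mem hyS) hl hopen hu
    obtain ⟨rfl, hs, hl⟩ := hl
    have hwZ : ∀ t ∈ l.head?, ¬ Collider s t → s.dst ∉ Z :=
      fun t ht => ((List.isChain_cons.1 hopen).1 t ht).2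
    rcases s with ⟨u, _ | _ | _, w⟩
    · have huZ : u ∉ Z := huZ _ rfl fun h => by simp [Step.HeadAtSrc] at h
      exact MoralE.reflTransGen_head hva (.inl rfl) hau huZ <|
        ih hl hopen.tail hwA (fun t ht hsrc => hwZ t ht fun hc => hsrc hc.2)
          (.inr ⟨hu, hwA, hs⟩) .refl
    · have hwZ : w ∉ Z := by
        cases l with
        | nil => exact (show w = y from hl) ▸ hyZ
        | cons t r => exact hwZ t rfl fun hc => by simp [Collider, Step.HeadAtDst] at hc
      exact MoralE.reflTransGen_head hva (.inr ⟨hwA, hu, hs⟩) hau hwZ <|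
        ih hl hopen.tail hwA (fun _ _ _ => hwZ) (.inl rfl) .refl
    · exact ih hl hopen.tail hwA (fun t ht hsrc => hwZ t ht fun hc => hsrc hc.2) hva
        (hau.tail ⟨hs.1, hs.2, Set.pair_subset hu hwA⟩)

end WalkToMoral

theorem dSep_iff_sep_moral_ancestral_closure_general {V : Type*}
    (E : V → V → Prop) (H : Set (Set V)) (X Y Z : Set V) :
    DSep E H X Y Z ↔
      USep (MoralE (InducedE E (AncSet E (X ∪ Y ∪ Z)))
        (InducedH H (AncSet E (X ∪ Y ∪ Z)))) X Y Z := by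
  constructor
  · rintro hD x hx y hy ⟨hxZ, hpath⟩
    obtain ⟨hyZ, l, hl, hweak⟩ := exists_weakOpenWalk_of_reflTransGen hxZ hpath
    obtain hnD | ⟨y', hy', hy'Z, l', hl', hopen, -⟩ := not_dSep_or_exists_openWalk hy hyZ hl hweak
    · exact hnD hD
    · exact not_dSep_of_isWalk hx hy' hxZ hy'Z hl' hopen hD
  · rintro hU x hx y hy l hl ⟨hxZ, hyZ, hopen⟩
    refine hU x hx y hy ⟨hxZ, ?_⟩
    exact reflTransGen_moral_of_openWalk Set.subset_union_right (.inl (.inr hy)) hyZ hl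
      (dInteriorOpen_iff_isChain.1 hopen) (mem_ancSet_of_mem (.inl (.inl hx))) (fun _ _ _ => hxZ)
      (.inl rfl) .refl

/-- For any HEDG `G` and subsets `X, Y, Z`: `X ⟂_G^d Y | Z` iff `X` is
separated from `Y` given `Z` in the (generalized) moralization of the ancestral closure
`Anc^G(X ∪ Y ∪ Z)` (with its induced sub-HEDG structure). -/
theorem dSep_iff_sep_moral_ancestral_closure {V : Type*} [Fintype V]
    (E : V → V → Prop) (H : Set (Set V)) (hH : IsSimplicial H) (X Y Z : Set V) :
    DSep E H X Y Z ↔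
      USep (MoralE (InducedE E (AncSet E (X ∪ Y ∪ Z)))
        (InducedH H (AncSet E (X ∪ Y ∪ Z)))) X Y Z :=
  dSep_iff_sep_moral_ancestral_closure_general E H X Y Z

end HedgPaper
end

section
/- For an undirected graph G=(V,E), if v ∈ W ⊆ V, then the neighbours of v outside W, i.e. ∂_G(v)∖W, form a complete subgraph in the marginalization G^{marg∖W}; moreover, if v ∉ W and ∂_G(v) is complete in G, then ∂_{G^{marg∖W}}(v) is complete in G^{marg∖W}. -/
namespace HedgPaper

variable {V : Type*}

/-- `x` and `y` are joined by a walk of `A` all of whose interior nodes lie in `W`. -/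
def JoinedThrough (A : V → V → Prop) (W : Set V) (x y : V) : Prop :=
  ∃ c, Relation.ReflTransGen (fun x y => A x y ∧ y ∈ W) x c ∧ A c y

section JoinedThrough

open Relation

variable {A : V → V → Prop} {W : Set V} {v x y z : V}

theorem JoinedThrough.of_adj (h : A x y) : JoinedThrough A W x y := ⟨x, .refl, h⟩

theorem JoinedThrough.trans (hxy : JoinedThrough A W x y) (hy : y ∈ W)
    (hyz : JoinedThrough A W y z) : JoinedThrough A W x z := by
  obtain ⟨c, hxc, hcy⟩ := hxy
  obtain ⟨d, hyd, hdz⟩ := hyz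
  exact ⟨d, (hxc.tail ⟨hcy, hy⟩).trans hyd, hdz⟩

theorem JoinedThrough.symm (hA : ∀ a b, A a b → A b a) (h : JoinedThrough A W x y) :
    JoinedThrough A W y x := by
  obtain ⟨c, hxc, hcy⟩ := h
  induction hxc using ReflTransGen.head_induction_on with
  | refl => exact .of_adj (hA _ _ hcy)
  | head hxx' _ ih => exact ih.trans hxx'.2 (.of_adj (hA _ _ hxx'.1))

theorem JoinedThrough.exists_adj (h : JoinedThrough A W x y) :
    ∃ n, A x n ∧ (n = y ∨ n ∈ W ∧ JoinedThrough A W n y) := by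
  obtain ⟨c, hxc, hcy⟩ := h
  rcases hxc.cases_head with rfl | ⟨n, ⟨hxn, hn⟩, hnc⟩
  · exact ⟨y, hcy, .inl rfl⟩
  · exact ⟨n, hxn, .inr ⟨hn, c, hnc, hcy⟩⟩

theorem reflGen_joinedThrough_symm (hA : ∀ a b, A a b → A b a) :
    ReflGen (JoinedThrough A W) x y → ReflGen (JoinedThrough A W) y x
  | .refl => .refl
  | .single h => .single (h.symm hA)

theorem reflGen_joinedThrough_trans (hxy : ReflGen (JoinedThrough A W) x y)
    (hyz : y = z ∨ y ∈ W ∧ JoinedThrough A W y z) : ReflGen (JoinedThrough A W) x z := by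
  rcases hyz with rfl | ⟨hy, hyz⟩
  · exact hxy
  · rcases hxy with _ | hxy
    · exact .single hyz
    · exact .single (hxy.trans hy hyz)

/-- Splice the two walks at their first steps `v — n`, `v — m`: `n` and `m` are equal or adjacent,
and each lies in `W` unless it is already the endpoint. -/
theorem JoinedThrough.of_complete_nbhd (hA : ∀ a b, A a b → A b a)
    (hv : ∀ a b, A v a → A v b → a ≠ b → A a b)
    (hx : JoinedThrough A W v x) (hy : JoinedThrough A W v y) (hxy : x ≠ y) :
    JoinedThrough A W x y := by
  obtain ⟨n, hvn, hnx⟩ := hx.exists_adj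
  obtain ⟨m, hvm, hmy⟩ := hy.exists_adj
  have hnm : ReflGen (JoinedThrough A W) n m := by
    by_cases h : n = m
    · exact h ▸ .refl
    · exact .single (.of_adj (hv n m hvn hvm h))
  have hxm := reflGen_joinedThrough_symm hA
    (reflGen_joinedThrough_trans (reflGen_joinedThrough_symm hA hnm) hnx)
  rcases reflGen_joinedThrough_trans hxm hmy with _ | hxy'
  · exact (hxy rfl).elim
  · exact hxy'

end JoinedThrough

theorem marg_complete_neighbourhoods_general {V : Type*}
    (A : V → V → Prop) (hsymm : ∀ a b, A a b → A b a)
    (W : Set V) (v : V) :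
    (v ∈ W → ∀ a b, A v a → a ∉ W → A v b → b ∉ W → a ≠ b → MargUnd A W a b) ∧
    (v ∉ W → (∀ a b, A v a → A v b → a ≠ b → A a b) →
      ∀ a b, MargUnd A W v a → MargUnd A W v b → a ≠ b → MargUnd A W a b) := by
  refine ⟨fun hvW a b hva haW hvb hbW hab => ?_, ?_⟩
  · exact ⟨haW, hbW, hab,
      (JoinedThrough.of_adj (hsymm _ _ hva)).trans hvW (JoinedThrough.of_adj hvb)⟩
  · rintro - hcomp a b ⟨-, haW, -, ha⟩ ⟨-, hbW, -, hb⟩ hab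
    exact ⟨haW, hbW, hab, JoinedThrough.of_complete_nbhd hsymm hcomp ha hb hab⟩

/-- For an undirected graph `G = (V,A)` and `W ⊆ V`:
(i) if `v ∈ W` then the neighbours of `v` outside `W` form a complete subgraph of the
marginalization `G^{marg∖W}`; (ii) if `v ∉ W` and the neighbourhood `∂_G(v)` is complete
in `G`, then `∂_{G^{marg∖W}}(v)` is complete in `G^{marg∖W}`. -/
theorem marg_complete_neighbourhoods {V : Type*} [Fintype V]
    (A : V → V → Prop) (hsymm : ∀ a b, A a b → A b a) (hirr : ∀ a, ¬ A a a)
    (W : Set V) (v : V) :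
    (v ∈ W → ∀ a b, A v a → a ∉ W → A v b → b ∉ W → a ≠ b → MargUnd A W a b) ∧
    (v ∉ W → (∀ a b, A v a → A v b → a ≠ b → A a b) →
      ∀ a b, MargUnd A W v a → MargUnd A W v b → a ≠ b → MargUnd A W a b) :=
  marg_complete_neighbourhoods_general A hsymm W v

end HedgPaper
end

section
/- Separation in an undirected graph is stable under marginalization: for an undirected graph G=(V,E) and X,Y,Z,W ⊆ V with W ∩ (X∪Y∪Z) = ∅, X ⟂_G Y | Z holds iff X ⟂_{G^{marg∖W}} Y | Z holds. -/
namespace HedgPaper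

variable {V : Type*}

/-!
A path of the marginal graph expands into a path of `A`: each marginal edge is realised by a
path whose intermediate nodes lie in `W`, hence outside `Z`. Conversely, a path of `A` between
nodes outside `W` compresses into a marginal path: each maximal excursion into `W` together
with the edge leaving it is a single marginal edge, and the nodes it keeps were already outside `Z`.
-/

open Relation

theorem eq_of_reflTransGen_of_not_mem {r : V → V → Prop} {W : Set V} {a b : V}
    (hab : ReflTransGen (fun x y => r x y ∧ y ∈ W) a b) (hb : b ∉ W) : a = b := by
  rcases hab.cases_tail with rfl | ⟨_, _, _, hbW⟩
  · rfl
  · exact absurd hbW hb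

section Marginalization

variable {A : V → V → Prop} {W Z : Set V} {x y : V}

theorem reflTransGen_of_margUnd (hWZ : Disjoint W Z)
    (h : ReflTransGen (fun a b => MargUnd A W a b ∧ b ∉ Z) x y) :
    ReflTransGen (fun a b => A a b ∧ b ∉ Z) x y :=
  reflTransGen_closed (fun _ _ ⟨⟨_, _, _, _, hac, hcb⟩, hb⟩ =>
    (ReflTransGen.mono (fun _ _ huv => ⟨huv.1, Set.disjoint_left.mp hWZ huv.2⟩) _ _ hac).tail
      ⟨hcb, hb⟩) _ _ h

theorem reflTransGen_margUnd_of_excursion {s a : V} (hs : s ∉ W) (hy : y ∉ W)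
    (hsa : ReflTransGen (fun u v => A u v ∧ v ∈ W) s a)
    (hay : ReflTransGen (fun u v => A u v ∧ v ∉ Z) a y) :
    ReflTransGen (fun u v => MargUnd A W u v ∧ v ∉ Z) s y := by
  induction hay using ReflTransGen.head_induction_on generalizing s with
  | refl => rw [eq_of_reflTransGen_of_not_mem hsa hy]
  | @head a b hab _ ih =>
    by_cases hbW : b ∈ W
    · exact ih hs (hsa.tail ⟨hab.1, hbW⟩)
    by_cases hsb : s = b
    · subst hsb
      exact ih hs .refl
    · exact .head ⟨⟨hs, hbW, hsb, a, hsa, hab.1⟩, hab.2⟩ (ih hbW .refl)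

end Marginalization

theorem uSep_marginalization_general {V : Type*}
    (A : V → V → Prop)
    (X Y Z W : Set V) (hW : W ∩ (X ∪ Y ∪ Z) = ∅) :
    USep A X Y Z ↔ USep (MargUnd A W) X Y Z := by
  have hdisj : Disjoint W (X ∪ Y ∪ Z) := Set.disjoint_iff_inter_eq_empty.mpr hW
  have hWZ : Disjoint W Z := hdisj.mono_right Set.subset_union_right
  have hXW : ∀ x ∈ X, x ∉ W := fun x hx hxW => Set.disjoint_left.mp hdisj hxW (.inl (.inl hx))
  have hYW : ∀ y ∈ Y, y ∉ W := fun y hy hyW => Set.disjoint_left.mp hdisj hyW (.inl (.inr hy))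
  constructor
  · rintro h x hx y hy ⟨hxZ, hxy⟩
    exact h x hx y hy ⟨hxZ, reflTransGen_of_margUnd hWZ hxy⟩
  · rintro h x hx y hy ⟨hxZ, hxy⟩
    exact h x hx y hy ⟨hxZ, reflTransGen_margUnd_of_excursion (hXW x hx) (hYW y hy) .refl hxy⟩

/-- Separation in an undirected graph is stable under marginalization:
for `W ∩ (X ∪ Y ∪ Z) = ∅`, `X ⟂_G Y | Z` iff `X ⟂_{G^{marg∖W}} Y | Z`. -/
theorem uSep_marginalization {V : Type*} [Fintype V]
    (A : V → V → Prop) (hsymm : ∀ a b, A a b → A b a) (hirr : ∀ a, ¬ A a a)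
    (X Y Z W : Set V) (hW : W ∩ (X ∪ Y ∪ Z) = ∅) :
    USep A X Y Z ↔ USep (MargUnd A W) X Y Z :=
  uSep_marginalization_general A X Y Z W hW

end HedgPaper
end
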